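/- arXiv:2305.05188 — 6 statements merged into one kernel-verified Lean document; each statement's English description precedes it below -/
import Mathlib

section
/- For every integer r, (u_1⋯u_n) · e_{n−r}(M) = E_r(u) in R, where M is the multiset {u_1,…,u_n, u_1^{-1},…,u_n^{-1}}. -/
/-- The `j`-th elementary symmetric function of a finite multiset `S` of ring elements,
indexed by `j : ℤ`, with `e_0(S) = 1` and `e_j(S) = 0` for `j < 0` or `j > |S|`. -/
def msym {R : Type*} [CommRing R] (S : Multiset R) (j : ℤ) : R :=
  if 0 ≤ j then ((Multiset.powersetCard j.toNat S).map Multiset.prod).sum else 0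

/-- The multiset `{u_1, …, u_n}` of the images in `R` of the units `u_i`. -/
def uMS {R : Type*} [CommRing R] {n : ℕ} (u : Fin n → Rˣ) : Multiset R :=
  Multiset.map (fun i => (u i : R)) Finset.univ.val

/-- The multiset `{u_1^{-1}, …, u_n^{-1}}`. -/
def uMSinv {R : Type*} [CommRing R] {n : ℕ} (u : Fin n → Rˣ) : Multiset R :=
  Multiset.map (fun i => (((u i)⁻¹ : Rˣ) : R)) Finset.univ.val

/-- `E_r(u) = Σ_{i=0}^{n} e_i(u) · e_{r+i}(u)` for `r : ℤ`. -/
def uE {R : Type*} [CommRing R] {n : ℕ} (u : Fin n → Rˣ) (r : ℤ) : R :=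
  ∑ i ∈ Finset.range (n + 1), msym (uMS u) i * msym (uMS u) (r + i)

open Polynomial Finset

section Aux

variable {R : Type*} [CommRing R] {n : ℕ} (u : Fin n → Rˣ)

lemma msym_eq_esymm (S : Multiset R) (j : ℤ) (h : 0 ≤ j) :
    msym S j = S.esymm j.toNat := by
  rw [msym, if_pos h, Multiset.esymm]

lemma msym_neg (S : Multiset R) (j : ℤ) (h : j < 0) : msym S j = 0 := by
  rw [msym, if_neg (not_le.2 h)]

lemma esymm_eq_zero_of_lt (S : Multiset R) (j : ℕ) (h : Multiset.card S < j) :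
    S.esymm j = 0 := by
  rw [Multiset.esymm, Multiset.powersetCard_eq_empty _ h]
  rfl

lemma card_uMS : Multiset.card (uMS u) = n := by
  rw [uMS, Multiset.card_map]
  simp

lemma card_uMSinv : Multiset.card (uMSinv u) = n := by
  rw [uMSinv, Multiset.card_map]
  simp

lemma coeffP (x : ℕ) (h : x ≤ n) :
    (∏ i, (X + C (u i : R))).coeff x = (uMS u).esymm (n - x) := by
  have hc : Multiset.card (Finset.univ.val : Multiset (Fin n)) = n := by simp
  have := Multiset.prod_X_add_C_coeff' (Finset.univ.val)
    (fun i : Fin n => (u i : R)) (k := x) (by rw [hc]; exact h)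
  rw [hc] at this
  rw [uMS, ← this]; rfl

lemma coeffQ (x : ℕ) (h : x ≤ n) :
    (∏ i, (X + C (((u i)⁻¹ : Rˣ) : R))).coeff x = (uMSinv u).esymm (n - x) := by
  have hc : Multiset.card (Finset.univ.val : Multiset (Fin n)) = n := by simp
  have := Multiset.prod_X_add_C_coeff' (Finset.univ.val)
    (fun i : Fin n => (((u i)⁻¹ : Rˣ) : R)) (k := x) (by rw [hc]; exact h)
  rw [hc] at this
  rw [uMSinv, ← this]; rfl

lemma coeff_zero_of_gt (v : Fin n → R) (x : ℕ) (h : n < x) :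
    (∏ i : Fin n, (X + C (v i))).coeff x = 0 := by
  apply Polynomial.coeff_eq_zero_of_natDegree_lt
  have h1 : (∏ i : Fin n, (X + C (v i))).natDegree ≤ ∑ i : Fin n, (X + C (v i)).natDegree :=
    Polynomial.natDegree_prod_le _ _
  have h2 : ∑ i : Fin n, (X + C (v i)).natDegree ≤ ∑ _i : Fin n, 1 :=
    Finset.sum_le_sum (fun i _ =>
      (Polynomial.natDegree_add_le _ _).trans
        (max_le natDegree_X_le ((natDegree_C _).le.trans zero_le_one)))
  have h3 : ∑ _i : Fin n, 1 = n := by simp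
  omega

/-- complement identity: `(∏ u) · e_c(u⁻¹) = e_{n-c}(u)` for `c ≤ n`. -/
lemma prod_mul_esymm_inv (c : ℕ) (hc : c ≤ n) :
    (∏ i, (u i : R)) * (uMSinv u).esymm c = (uMS u).esymm (n - c) := by
  rw [uMSinv, uMS, Finset.esymm_map_val, Finset.esymm_map_val, Finset.mul_sum]
  refine Finset.sum_nbij' (fun t => tᶜ) (fun t => tᶜ) ?_ ?_ ?_ ?_ ?_
  · intro t ht
    simp only [Finset.mem_powersetCard_univ] at *
    rw [Finset.card_compl, ht, Fintype.card_fin]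
  · intro t ht
    simp only [Finset.mem_powersetCard_univ] at *
    rw [Finset.card_compl, ht, Fintype.card_fin, Nat.sub_sub_self hc]
  · intro t _; exact compl_compl t
  · intro t _; exact compl_compl t
  · intro t ht
    have h1 : (∏ i, (u i : R)) = (∏ i ∈ t, (u i : R)) * ∏ i ∈ tᶜ, (u i : R) := by
      rw [Finset.prod_mul_prod_compl]
    rw [h1, mul_assoc, mul_comm, mul_assoc]
    have h2 : (∏ i ∈ t, ((((u i)⁻¹ : Rˣ)) : R)) * ∏ i ∈ t, (u i : R) = 1 := by
      rw [← Finset.prod_mul_distrib]; simp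
    rw [h2, mul_one]

/-- auxiliary truncated convolution summand -/
noncomputable def Faux {R : Type*} [CommRing R] (c : R) (P Q : Polynomial R) (k x : ℕ) : R :=
  if x ≤ k then c * (P.coeff x * Q.coeff (k - x)) else 0

lemma Faux_pos {R : Type*} [CommRing R] (c : R) (P Q : Polynomial R) {k x : ℕ} (h : x ≤ k) :
    Faux c P Q k x = c * (P.coeff x * Q.coeff (k - x)) := if_pos h

lemma Faux_neg {R : Type*} [CommRing R] (c : R) (P Q : Polynomial R) {k x : ℕ} (h : ¬ x ≤ k) :
    Faux c P Q k x = 0 := if_neg h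

end Aux

/-- For every integer `r`, `(u_1⋯u_n) · e_{n−r}(M) = E_r(u)`, where `M` is the multiset
`{u_1,…,u_n, u_1^{-1},…,u_n^{-1}}`. -/
theorem prod_mul_msym_sub (R : Type*) [CommRing R] (n : ℕ) (u : Fin n → Rˣ) (r : ℤ) :
    (∏ i, (u i : R)) * msym (uMS u + uMSinv u) ((n : ℤ) - r) = uE u r := by
  have cardM : Multiset.card (uMS u + uMSinv u) = 2 * n := by
    rw [Multiset.card_add, card_uMS, card_uMSinv]; ring
  rcases lt_or_ge (n : ℤ) r with hr | hr
  · -- r > n : both sides are 0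
    rw [msym_neg _ _ (by omega), mul_zero, uE]
    refine (Finset.sum_eq_zero fun i hi => ?_).symm
    have hi' : i < n + 1 := Finset.mem_range.1 hi
    rw [msym_eq_esymm (uMS u) (r + i) (by omega),
      esymm_eq_zero_of_lt _ _ (by rw [card_uMS]; omega), mul_zero]
  rcases lt_or_ge r (-(n : ℤ)) with hr' | hr'
  · -- r < -n : both sides are 0
    rw [msym_eq_esymm (uMS u + uMSinv u) _ (by omega),
      esymm_eq_zero_of_lt _ _ (by rw [cardM]; omega), mul_zero, uE]
    refine (Finset.sum_eq_zero fun i hi => ?_).symm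
    have hi' : i < n + 1 := Finset.mem_range.1 hi
    rw [msym_neg (uMS u) (r + i) (by omega), mul_zero]
  -- main case : -n ≤ r ≤ n
  set P : R[X] := ∏ i, (X + C (u i : R)) with hP
  set Q : R[X] := ∏ i, (X + C (((u i)⁻¹ : Rˣ) : R)) with hQ
  set k : ℕ := (n + r).toNat with hk
  have hkr : (k : ℤ) = n + r := Int.toNat_of_nonneg (by omega)
  have hk2n : k ≤ 2 * n := by omega
  have hPQ : (P * Q).coeff k = msym (uMS u + uMSinv u) ((n : ℤ) - r) := by
    have hprod : ((uMS u + uMSinv u).map fun a => X + C a).prod = P * Q := by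
      rw [Multiset.map_add, Multiset.prod_add, uMS, uMSinv, Multiset.map_map,
        Multiset.map_map]
      rfl
    have := Multiset.prod_X_add_C_coeff (uMS u + uMSinv u) (k := k) (by rw [cardM]; exact hk2n)
    rw [hprod] at this
    rw [this, msym_eq_esymm (uMS u + uMSinv u) _ (by omega)]
    congr 1
    rw [cardM]
    omega
  rw [← hPQ, Polynomial.coeff_mul, Finset.Nat.sum_antidiagonal_eq_sum_range_succ_mk,
    Finset.mul_sum]
  set c : R := ∏ i, (u i : R) with hc
  have LHS : ∑ x ∈ range (k + 1), c * (P.coeff x * Q.coeff (k - x))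
      = ∑ x ∈ range (2 * n + 1), Faux c P Q k x := by
    rw [Finset.sum_congr rfl (g := Faux c P Q k) (fun x hx => by
      rw [Finset.mem_range] at hx; rw [Faux_pos c P Q (by omega)])]
    refine Finset.sum_subset (by intro x hx; rw [Finset.mem_range] at *; omega) ?_
    intro x _ hx2
    rw [Finset.mem_range, not_lt] at hx2
    exact Faux_neg c P Q (by omega)
  rw [LHS, uE]
  -- reflect the RHS sum
  have RHS : ∑ i ∈ range (n + 1), msym (uMS u) i * msym (uMS u) (r + i)
      = ∑ x ∈ range (n + 1), msym (uMS u) (n - x : ℕ) * msym (uMS u) (r + ((n : ℤ) - x)) := by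
    rw [← Finset.sum_range_reflect]
    refine Finset.sum_congr rfl fun x hx => ?_
    rw [Finset.mem_range] at hx
    have h1 : (n + 1 - 1 - x) = n - x := by omega
    have h2 : ((n - x : ℕ) : ℤ) = (n : ℤ) - x := by omega
    rw [h1, h2]
  rw [RHS]
  have step : ∀ x ∈ range (n + 1),
      msym (uMS u) (n - x : ℕ) * msym (uMS u) (r + ((n : ℤ) - x)) = Faux c P Q k x := by
    intro x hx
    rw [Finset.mem_range] at hx
    have hxn : x ≤ n := by omega
    by_cases hxk : x ≤ k
    · rw [Faux_pos c P Q hxk, mul_left_comm, hP, coeffP u x hxn,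
        msym_eq_esymm (uMS u) ((n - x : ℕ) : ℤ) (by omega)]
      have htn : (((n - x : ℕ) : ℤ)).toNat = n - x := by omega
      rw [htn]
      congr 1
      -- ⊢ msym (uMS u) (r + (n - x)) = c * Q.coeff (k - x)
      by_cases hqk : k - x ≤ n
      · rw [hQ, coeffQ u _ hqk, hc, prod_mul_esymm_inv u (n - (k - x)) (by omega),
          msym_eq_esymm (uMS u) _ (by omega)]
        congr 1
        omega
      · rw [hQ, coeff_zero_of_gt _ _ (by omega), mul_zero,
          msym_eq_esymm (uMS u) _ (by omega),
          esymm_eq_zero_of_lt _ _ (by rw [card_uMS]; omega)]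
    · rw [Faux_neg c P Q hxk, msym_neg (uMS u) (r + ((n : ℤ) - x)) (by omega), mul_zero]
  rw [Finset.sum_congr rfl step]
  refine (Finset.sum_subset (by intro x hx; rw [Finset.mem_range] at *; omega) ?_).symm
  intro x _ hx2
  rw [Finset.mem_range, not_lt] at hx2
  by_cases hxk : x ≤ k
  · rw [Faux_pos c P Q hxk, hP, coeff_zero_of_gt _ _ (by omega), zero_mul, mul_zero]
  · exact Faux_neg c P Q hxk
end

section
/- For every integer r, e_{n−r}(M) = e_{n+r}(M) in R, where M is the multiset {u_1,…,u_n, u_1^{-1},…,u_n^{-1}}. -/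
open Polynomial

lemma my_deg_le {R : Type*} [CommRing R] (c : R) : ((X + C c : R[X])).natDegree ≤ 1 :=
  le_trans (natDegree_add_le _ _) (by simp [natDegree_X_le])

lemma my_prod_deg_le {R : Type*} [CommRing R] (t : Multiset R) :
    ((t.map fun a => X + C a).prod).natDegree ≤ Multiset.card t := by
  refine le_trans (Polynomial.natDegree_multiset_prod_le _) ?_
  rw [Multiset.map_map]
  refine le_trans (Multiset.sum_le_card_nsmul _ 1 ?_) (by simp)
  intro x hx
  simp only [Multiset.mem_map] at hx
  obtain ⟨b, _, rfl⟩ := hx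
  exact my_deg_le b

/-- Reflecting the product of `X + C a` over a multiset of units. -/
lemma my_reflect_prod_X_add_C {R : Type*} [CommRing R] (s : Multiset Rˣ) :
    reflect (Multiset.card s) (((s.map Units.val).map fun a => X + C a).prod) =
      C (s.map Units.val).prod *
        (((s.map fun a => ((a⁻¹ : Rˣ) : R)).map fun a => X + C a).prod) := by
  induction s using Multiset.induction with
  | empty => simp [reflect_one]
  | cons a s ih =>
    simp only [Multiset.map_cons, Multiset.prod_cons, Multiset.card_cons]
    rw [add_comm (Multiset.card s) 1]
    rw [reflect_mul _ _ (my_deg_le _) (le_trans (my_prod_deg_le _) (by simp)), ih]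
    have hXC : reflect 1 ((X : R[X]) + C ((a : Rˣ) : R)) =
        C ((a : Rˣ) : R) * (X + C (((a⁻¹ : Rˣ) : R))) := by
      rw [reflect_add, reflect_C]
      simp only [reflect_one_X, mul_add, ← C_mul, Units.mul_inv, C_1, pow_one]
      ring
    rw [hXC, C_mul]
    ring

lemma my_esymm_of_card_lt {R : Type*} [CommRing R] (M : Multiset R) {k : ℕ}
    (h : Multiset.card M < k) : M.esymm k = 0 := by
  rw [Multiset.esymm, Multiset.powersetCard_eq_empty _ h]
  simp

lemma my_esymm_symm {R : Type*} [CommRing R] (s : Multiset Rˣ)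
    (hinv : s.map (fun a => ((a⁻¹ : Rˣ) : R)) = s.map Units.val)
    (hprod : (s.map Units.val).prod = 1) {k : ℕ} (hk : k ≤ Multiset.card s) :
    (s.map Units.val).esymm k =
      (s.map Units.val).esymm (Multiset.card s - k) := by
  have hrefl : reflect (Multiset.card s) (((s.map Units.val).map fun a => X + C a).prod) =
      ((s.map Units.val).map fun a => X + C a).prod := by
    rw [my_reflect_prod_X_add_C s, hprod, map_one, one_mul, hinv]
  have hcM : Multiset.card (s.map Units.val) = Multiset.card s := Multiset.card_map _ _
  have key : ∀ i ≤ Multiset.card s,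
      (((s.map Units.val).map fun a => X + C a).prod).coeff i
        = (s.map Units.val).esymm (Multiset.card s - i) := by
    intro i hi
    rw [Multiset.prod_X_add_C_coeff (s.map Units.val) (hcM ▸ hi), hcM]
  have hco : (((s.map Units.val).map fun a => X + C a).prod).coeff k
      = (((s.map Units.val).map fun a => X + C a).prod).coeff (Multiset.card s - k) := by
    conv_lhs => rw [← hrefl]
    rw [coeff_reflect, revAt_le hk]
  have h1 : (((s.map Units.val).map fun a => X + C a).prod).coeff (Multiset.card s - k)
      = (s.map Units.val).esymm k := by
    rw [key _ (Nat.sub_le _ _), Nat.sub_sub_self hk]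
  have h2 : (((s.map Units.val).map fun a => X + C a).prod).coeff k
      = (s.map Units.val).esymm (Multiset.card s - k) := key k hk
  rw [← h1, ← h2, hco]

/-- For every integer `r`, `e_{n−r}(M) = e_{n+r}(M)`, where `M` is the multiset
`{u_1,…,u_n, u_1^{-1},…,u_n^{-1}}`. -/
theorem msym_sub_eq_msym_add (R : Type*) [CommRing R] (n : ℕ) (u : Fin n → Rˣ) (r : ℤ) :
    msym (uMS u + uMSinv u) ((n : ℤ) - r) = msym (uMS u + uMSinv u) ((n : ℤ) + r) := by
  classical
  set s : Multiset Rˣ :=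
    Multiset.map u Finset.univ.val + Multiset.map (fun i => (u i)⁻¹) Finset.univ.val with hs
  have hMs : s.map Units.val = uMS u + uMSinv u := by
    simp only [hs, Multiset.map_add, Multiset.map_map, uMS, uMSinv]
    rfl
  have hcard : Multiset.card s = 2 * n := by
    simp [hs, two_mul]
  have hinv : s.map (fun a => ((a⁻¹ : Rˣ) : R)) = s.map Units.val := by
    simp only [hs, Multiset.map_add, Multiset.map_map, Function.comp_def, inv_inv]
    rw [add_comm]
  have hprod : (s.map Units.val).prod = 1 := by
    rw [show (Multiset.map Units.val s) = Multiset.map (Units.coeHom R) s from rfl,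
      Multiset.prod_hom]
    have : s.prod = 1 := by
      rw [hs, Multiset.prod_add, Multiset.prod_map_inv]
      simp
    rw [this, map_one]
  have hmsym : ∀ j : ℤ, 0 ≤ j →
      msym (uMS u + uMSinv u) j = (s.map Units.val).esymm j.toNat := by
    intro j hj
    rw [msym, if_pos hj, hMs]
    rfl
  have hcardM : Multiset.card (s.map Units.val) = 2 * n := by
    rw [Multiset.card_map, hcard]
  rcases lt_trichotomy ((n : ℤ) - r) 0 with h | h | h
  · rw [msym, if_neg (not_le.mpr h), hmsym _ (by omega),
      my_esymm_of_card_lt _ (by rw [hcardM]; omega)]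
  · rw [hmsym _ h.ge, hmsym _ (by omega : (0:ℤ) ≤ (n:ℤ) + r)]
    have hk : ((n : ℤ) - r).toNat ≤ Multiset.card s := by omega
    rw [my_esymm_symm s hinv hprod hk]
    congr 1
    omega
  · rcases lt_or_ge ((n : ℤ) + r) 0 with h2 | h2
    · rw [hmsym _ (by omega : (0:ℤ) ≤ (n:ℤ) - r),
        my_esymm_of_card_lt _ (by rw [hcardM]; omega), msym, if_neg (not_le.mpr h2)]
    · rw [hmsym _ h.le, hmsym _ h2]
      rcases le_or_gt (-(n:ℤ)) r with hr | hr
      · rcases le_or_gt r (n : ℤ) with hr2 | hr2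
        · have hk : ((n : ℤ) - r).toNat ≤ Multiset.card s := by omega
          rw [my_esymm_symm s hinv hprod hk]
          congr 1
          omega
        · rw [my_esymm_of_card_lt _ (by rw [hcardM]; omega),
            my_esymm_of_card_lt _ (by rw [hcardM]; omega)]
      · rw [my_esymm_of_card_lt _ (by rw [hcardM]; omega),
          my_esymm_of_card_lt _ (by rw [hcardM]; omega)]
end

section
/- For all a, b, c ≥ 0 and every integer k with 0 ≤ k ≤ min{a,b}, the weight generating function of the set SST_n(λ(a,b,c))_{(k)} of semistandard tableaux of shape λ(a,b,c) with entries in {1,…,n} and residue 𝔯_T = k equals e_{a+b+c−k}·e_{c+k} − e_{a+b+c−k+1}·e_{c+k−1} in ℤ[x_1,…,x_n] (the dual Jacobi–Trudi expression for the Schur polynomial s_{(a+b+c−k, c+k)'}(x_1,…,x_n)). -/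
open MvPolynomial

/-- A semistandard tableau of skew shape `λ(a,b,c) = (2^{b+c},1^a)/(1^b)` with entries in
`{1,…,n}` (encoded as `Fin n`), given as a pair `T = (L, R)` of strictly increasing columns:
`L` of height `a+c` (occupying rows `b+1,…,a+b+c`) and `R` of height `b+c` (occupying rows
`1,…,b+c`), with the row condition `l_j ≤ r_{b+j}` for `1 ≤ j ≤ c` (here `0`-indexed). -/
def IsTab (n a b c : ℕ) (T : (Fin (a + c) → Fin n) × (Fin (b + c) → Fin n)) : Prop :=
  StrictMono T.1 ∧ StrictMono T.2 ∧
    ∀ (j : ℕ) (_ : j < c) (h2 : j < a + c) (h3 : b + j < b + c),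
      T.1 ⟨j, h2⟩ ≤ T.2 ⟨b + j, h3⟩

/-- The tableau obtained from `T` by sliding the right column `R` down by `k` positions
(`0 ≤ k ≤ min{a,b}`) is again semistandard, i.e. `l_j ≤ r_{b+j−k}` for all `1 ≤ j ≤ c+k`
(here `0`-indexed). -/
def Slides (n a b c : ℕ) (T : (Fin (a + c) → Fin n) × (Fin (b + c) → Fin n)) (k : ℕ) : Prop :=
  k ≤ a ∧ k ≤ b ∧
    ∀ (j : ℕ) (_ : j < c + k) (h2 : j < a + c) (h3 : b + j - k < b + c),
      T.1 ⟨j, h2⟩ ≤ T.2 ⟨b + j - k, h3⟩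

/-- The residue `𝔯_T`: the maximal `k` such that sliding `R` down by `k` positions keeps the
tableau semistandard (`k = 0` always qualifies for a semistandard tableau). -/
noncomputable def tabResidue (n a b c : ℕ)
    (T : (Fin (a + c) → Fin n) × (Fin (b + c) → Fin n)) : ℕ :=
  sSup {k | Slides n a b c T k}

/-- The weight monomial `x^T = (∏_j x_{l_j}) · (∏_i x_{r_i})` of a tableau `T`. -/
noncomputable def tabWt (n a b c : ℕ) (T : (Fin (a + c) → Fin n) × (Fin (b + c) → Fin n)) :
    MvPolynomial (Fin n) ℤ :=
  (∏ j, X (T.1 j)) * (∏ i, X (T.2 i))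

/-- The weight generating function `ch X = Σ_{T ∈ X} x^T` of a (finite) set of tableaux. -/
noncomputable def tabCh (n a b c : ℕ)
    (Xs : Set ((Fin (a + c) → Fin n) × (Fin (b + c) → Fin n))) : MvPolynomial (Fin n) ℤ :=
  ∑ᶠ T ∈ Xs, tabWt n a b c T

/-- The `j`-th elementary symmetric polynomial in `x_1, …, x_n` over `ℤ`, indexed by `j : ℤ`,
with the conventions `e_0 = 1` and `e_j = 0` for `j < 0` or `j > n`. -/
noncomputable def eZ (n : ℕ) (j : ℤ) : MvPolynomial (Fin n) ℤ :=
  if 0 ≤ j then esymm (Fin n) ℤ j.toNat else 0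

/-- `E_r = Σ_{i=0}^{n} e_i · e_{r+i}` for `r : ℤ`. -/
noncomputable def EZ (n : ℕ) (r : ℤ) : MvPolynomial (Fin n) ℤ :=
  ∑ i ∈ Finset.range (n + 1), eZ n i * eZ n (r + i)

open Finset
variable {n : ℕ}

def cntLe (s : Finset (Fin n)) (v : Fin n) : ℕ := (s.filter (· ≤ v)).card

lemma cntLe_le_card (s : Finset (Fin n)) (v : Fin n) : cntLe s v ≤ s.card :=
  card_filter_le _ _

lemma cntLe_mono (s : Finset (Fin n)) {w v : Fin n} (h : w ≤ v) :
    cntLe s w ≤ cntLe s v :=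
  card_le_card (fun x hx => mem_filter.2 ⟨(mem_filter.1 hx).1, le_trans (mem_filter.1 hx).2 h⟩)

lemma cntLe_last (s : Finset (Fin n)) (hn : 0 < n) : cntLe s ⟨n - 1, by omega⟩ = s.card := by
  unfold cntLe
  rw [filter_true_of_mem]
  intro x _
  have hx := x.isLt
  exact Fin.le_def.2 (by simp only [Fin.val_mk]; omega)

lemma cntLe_succ (s : Finset (Fin n)) (w v : Fin n) (h : (w : ℕ) + 1 = (v : ℕ)) :
    cntLe s v ≤ cntLe s w + 1 := by
  unfold cntLe
  have : s.filter (· ≤ v) ⊆ insert v (s.filter (· ≤ w)) := by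
    intro x hx
    rcases mem_filter.1 hx with ⟨hxs, hxv⟩
    rcases eq_or_lt_of_le hxv with rfl | hlt
    · exact mem_insert_self _ _
    · exact mem_insert_of_mem (mem_filter.2 ⟨hxs, Fin.le_def.2 (by
        have := Fin.lt_def.1 hlt; omega)⟩)
  calc (s.filter (· ≤ v)).card ≤ (insert v (s.filter (· ≤ w))).card := card_le_card this
    _ ≤ (s.filter (· ≤ w)).card + 1 := card_insert_le _ _

lemma cntLe_zeroval (s : Finset (Fin n)) (v : Fin n) (h : (v : ℕ) = 0) : cntLe s v ≤ 1 := by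
  unfold cntLe
  have : s.filter (· ≤ v) ⊆ {v} := by
    intro x hx
    rcases mem_filter.1 hx with ⟨_, hxv⟩
    have := Fin.le_def.1 hxv
    exact mem_singleton.2 (Fin.ext (by omega))
  exact le_trans (card_le_card this) (by simp)

/-- swap the parts `≤ v` of the two finsets -/
def swapLe (v : Fin n) (P : Finset (Fin n) × Finset (Fin n)) :
    Finset (Fin n) × Finset (Fin n) :=
  (P.2.filter (· ≤ v) ∪ P.1.filter (fun x => ¬ x ≤ v),
   P.1.filter (· ≤ v) ∪ P.2.filter (fun x => ¬ x ≤ v))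

lemma swapLe_swap (v : Fin n) (P : Finset (Fin n) × Finset (Fin n)) :
    swapLe v (P.2, P.1) = ((swapLe v P).2, (swapLe v P).1) := rfl

lemma swapLe_involutive (v : Fin n) (P : Finset (Fin n) × Finset (Fin n)) :
    swapLe v (swapLe v P) = P := by
  unfold swapLe
  ext x <;> by_cases hx : x ≤ v
  · simp [mem_union, mem_filter, hx, not_lt.2 hx]
  · simp [mem_union, mem_filter, hx, not_le.1 hx]
  · simp [mem_union, mem_filter, hx, not_lt.2 hx]
  · simp [mem_union, mem_filter, hx, not_le.1 hx]

lemma filter_le_swapLe_fst (v w : Fin n) (hwv : w ≤ v) (P : Finset (Fin n) × Finset (Fin n)) :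
    (swapLe v P).1.filter (· ≤ w) = P.2.filter (· ≤ w) := by
  unfold swapLe
  ext x
  simp only [filter_union, mem_union, mem_filter]
  constructor
  · rintro (⟨⟨h1, _⟩, h3⟩ | ⟨⟨_, h2⟩, h3⟩)
    · exact ⟨h1, h3⟩
    · exact absurd (le_trans h3 hwv) h2
  · rintro ⟨h1, h2⟩
    exact Or.inl ⟨⟨h1, le_trans h2 hwv⟩, h2⟩

lemma cntLe_swapLe_fst (v w : Fin n) (hwv : w ≤ v) (P : Finset (Fin n) × Finset (Fin n)) :
    cntLe (swapLe v P).1 w = cntLe P.2 w := by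
  unfold cntLe; rw [filter_le_swapLe_fst v w hwv]

lemma cntLe_swapLe_snd (v w : Fin n) (hwv : w ≤ v) (P : Finset (Fin n) × Finset (Fin n)) :
    cntLe (swapLe v P).2 w = cntLe P.1 w := by
  have := cntLe_swapLe_fst v w hwv (P.2, P.1)
  rw [swapLe_swap] at this
  exact this

lemma card_swapLe_fst (v : Fin n) (P : Finset (Fin n) × Finset (Fin n)) :
    (swapLe v P).1.card = cntLe P.2 v + (P.1.card - cntLe P.1 v) := by
  unfold swapLe cntLe
  rw [card_union_of_disjoint]
  · congr 1
    have := card_filter_add_card_filter_not (s := P.1) (p := (· ≤ v))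
    omega
  · refine disjoint_left.2 (fun x hx hx' => ?_)
    exact (mem_filter.1 hx').2 (mem_filter.1 hx).2

lemma card_swapLe_snd (v : Fin n) (P : Finset (Fin n) × Finset (Fin n)) :
    (swapLe v P).2.card = cntLe P.1 v + (P.2.card - cntLe P.2 v) := by
  have := card_swapLe_fst v (P.2, P.1)
  rw [swapLe_swap] at this
  exact this

lemma prod_wt_swapLe (v : Fin n) (P : Finset (Fin n) × Finset (Fin n)) :
    (∏ i ∈ (swapLe v P).1, (X i : MvPolynomial (Fin n) ℤ)) * ∏ i ∈ (swapLe v P).2, X i =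
      (∏ i ∈ P.1, X i) * ∏ i ∈ P.2, X i := by
  have hd : ∀ s t : Finset (Fin n), Disjoint (s.filter (· ≤ v)) (t.filter (fun x => ¬ x ≤ v)) :=
    fun s t => disjoint_left.2 (fun x hx hx' => (mem_filter.1 hx').2 (mem_filter.1 hx).2)
  unfold swapLe
  rw [prod_union (hd _ _), prod_union (hd _ _)]
  have h1 := prod_filter_mul_prod_filter_not P.1 (· ≤ v) (fun i => (X i : MvPolynomial (Fin n) ℤ))
  have h2 := prod_filter_mul_prod_filter_not P.2 (· ≤ v) (fun i => (X i : MvPolynomial (Fin n) ℤ))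
  rw [← h1, ← h2]
  ring

def ExSet (d : ℕ) (A B : Finset (Fin n)) : Finset (Fin n) :=
  univ.filter (fun v => cntLe A v + d < cntLe B v)

lemma mem_exSet_iff {d : ℕ} {A B : Finset (Fin n)} {v : Fin n} :
    v ∈ ExSet d A B ↔ cntLe A v + d < cntLe B v := by
  unfold ExSet; simp

lemma exSet_min'_count {d : ℕ} {A B : Finset (Fin n)} (h : (ExSet d A B).Nonempty) :
    cntLe B ((ExSet d A B).min' h) = cntLe A ((ExSet d A B).min' h) + d + 1 := by
  set v₀ := (ExSet d A B).min' h with hv₀def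
  have hv₀ : cntLe A v₀ + d < cntLe B v₀ := mem_exSet_iff.1 ((ExSet d A B).min'_mem h)
  rcases Nat.eq_zero_or_pos (v₀ : ℕ) with h0 | hpos
  · have := cntLe_zeroval B v₀ h0
    omega
  · have hlt : (v₀ : ℕ) - 1 < n := by omega
    set w : Fin n := ⟨(v₀ : ℕ) - 1, hlt⟩ with hw
    have hwv : (w : ℕ) + 1 = (v₀ : ℕ) := by simp [hw]; omega
    have hwmem : w ∉ ExSet d A B := by
      intro hmem
      have := (ExSet d A B).min'_le w hmem
      rw [← hv₀def] at this
      have := Fin.le_def.1 this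
      simp [hw] at this
      omega
    have hnot : ¬ (cntLe A w + d < cntLe B w) := fun hc => hwmem (mem_exSet_iff.2 hc)
    have h1 := cntLe_succ B w v₀ hwv
    have h2 := cntLe_mono A (show w ≤ v₀ from Fin.le_def.2 (by simp [hw]))
    omega

/-- the minimal "crossing" point of the swapped pair is the same, and swapping
back recovers the original pair. -/
lemma exSet_swap_mem {d : ℕ} {A B : Finset (Fin n)} (h : (ExSet d A B).Nonempty) :
    (ExSet d A B).min' h ∈
      ExSet d (swapLe ((ExSet d A B).min' h) (A, B)).2
        (swapLe ((ExSet d A B).min' h) (A, B)).1 := by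
  set v₀ := (ExSet d A B).min' h with hv0
  rw [mem_exSet_iff, cntLe_swapLe_fst v₀ v₀ le_rfl, cntLe_swapLe_snd v₀ v₀ le_rfl]
  have hc := exSet_min'_count h
  rw [← hv0] at hc
  show cntLe A v₀ + d < cntLe B v₀
  omega

lemma exSet_swap_lb {d : ℕ} {A B : Finset (Fin n)} (h : (ExSet d A B).Nonempty)
    {w : Fin n}
    (hw : w ∈ ExSet d (swapLe ((ExSet d A B).min' h) (A, B)).2
        (swapLe ((ExSet d A B).min' h) (A, B)).1) :
    (ExSet d A B).min' h ≤ w := by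
  set v₀ := (ExSet d A B).min' h with hv₀def
  by_contra hlt
  push_neg at hlt
  rw [mem_exSet_iff, cntLe_swapLe_fst v₀ w (le_of_lt hlt),
    cntLe_swapLe_snd v₀ w (le_of_lt hlt)] at hw
  -- hw : cntLe A w + d < cntLe B w, so w ∈ ExSet d A B, contradicting minimality
  have : w ∈ ExSet d A B := mem_exSet_iff.2 hw
  exact absurd ((ExSet d A B).min'_le w this) (not_le.2 hlt)

lemma exSet_swap_min' {d : ℕ} {A B : Finset (Fin n)} (h : (ExSet d A B).Nonempty)
    (h' : (ExSet d (swapLe ((ExSet d A B).min' h) (A, B)).2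
        (swapLe ((ExSet d A B).min' h) (A, B)).1).Nonempty) :
    (ExSet d (swapLe ((ExSet d A B).min' h) (A, B)).2
        (swapLe ((ExSet d A B).min' h) (A, B)).1).min' h' = (ExSet d A B).min' h :=
  le_antisymm (min'_le _ _ (exSet_swap_mem h)) (le_min' _ _ _ (fun w hw => exSet_swap_lb h hw))

def vminEx (hn : 0 < n) (d : ℕ) (A B : Finset (Fin n)) : Fin n :=
  if h : (ExSet d A B).Nonempty then (ExSet d A B).min' h else ⟨0, hn⟩

lemma vminEx_of_nonempty (hn : 0 < n) {d : ℕ} {A B : Finset (Fin n)}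
    (h : (ExSet d A B).Nonempty) : vminEx hn d A B = (ExSet d A B).min' h := by
  unfold vminEx; rw [dif_pos h]

lemma bad_sum (hn : 0 < n) (p q d : ℕ) (hdq : d + 1 ≤ q) (hqp : q ≤ p + d) :
    ∑ P ∈ (univ : Finset (Finset (Fin n) × Finset (Fin n))).filter
        (fun P => P.1.card = p ∧ P.2.card = q ∧ (ExSet d P.1 P.2).Nonempty),
      ((∏ i ∈ P.1, (X i : MvPolynomial (Fin n) ℤ)) * ∏ i ∈ P.2, X i)
    = ∑ P ∈ (univ : Finset (Finset (Fin n) × Finset (Fin n))).filter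
        (fun P => P.1.card = p + d + 1 ∧ P.2.card = q - d - 1),
      ((∏ i ∈ P.1, X i) * ∏ i ∈ P.2, X i) := by
  refine Finset.sum_nbij' (i := fun P => swapLe (vminEx hn d P.1 P.2) P)
    (j := fun P => swapLe (vminEx hn d P.2 P.1) P) ?_ ?_ ?_ ?_ ?_
  · -- forward membership
    rintro ⟨A, B⟩ hP
    rw [mem_filter] at hP
    obtain ⟨-, hA, hB, hne⟩ := hP
    dsimp only at hA hB hne ⊢
    rw [mem_filter]
    refine ⟨mem_univ _, ?_, ?_⟩
    · rw [vminEx_of_nonempty hn hne, card_swapLe_fst]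
      have hc := exSet_min'_count hne
      have h1 := cntLe_le_card A ((ExSet d A B).min' hne)
      have h2 := cntLe_le_card B ((ExSet d A B).min' hne)
      simp only at *
      omega
    · rw [vminEx_of_nonempty hn hne, card_swapLe_snd]
      have hc := exSet_min'_count hne
      have h1 := cntLe_le_card A ((ExSet d A B).min' hne)
      have h2 := cntLe_le_card B ((ExSet d A B).min' hne)
      simp only at *
      omega
  · -- backward membership
    rintro ⟨A', B'⟩ hP
    rw [mem_filter] at hP
    obtain ⟨-, hA, hB⟩ := hP
    dsimp only at hA hB ⊢
    have hne : (ExSet d B' A').Nonempty := by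
      refine ⟨⟨n - 1, by omega⟩, mem_exSet_iff.2 ?_⟩
      rw [cntLe_last _ hn, cntLe_last _ hn, hA, hB]
      omega
    rw [mem_filter]
    have hc := exSet_min'_count hne
    set u := (ExSet d B' A').min' hne with hu
    have h1 := cntLe_le_card A' u
    have h2 := cntLe_le_card B' u
    refine ⟨mem_univ _, ?_, ?_, ?_⟩
    · rw [vminEx_of_nonempty hn hne, ← hu, card_swapLe_fst]
      simp only at *
      omega
    · rw [vminEx_of_nonempty hn hne, ← hu, card_swapLe_snd]
      simp only at *
      omega
    · -- the swapped pair has a crossing at u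
      rw [vminEx_of_nonempty hn hne, ← hu]
      refine ⟨u, mem_exSet_iff.2 ?_⟩
      have e1 : cntLe (swapLe u (A', B')).1 u = cntLe B' u := cntLe_swapLe_fst u u le_rfl (A', B')
      have e2 : cntLe (swapLe u (A', B')).2 u = cntLe A' u := cntLe_swapLe_snd u u le_rfl (A', B')
      rw [e1, e2]
      omega
  · -- left inverse
    rintro ⟨A, B⟩ hP
    rw [mem_filter] at hP
    obtain ⟨-, hA, hB, hne⟩ := hP
    dsimp only at hA hB hne ⊢
    rw [vminEx_of_nonempty hn hne]
    have hne' : (ExSet d (swapLe ((ExSet d A B).min' hne) (A, B)).2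
        (swapLe ((ExSet d A B).min' hne) (A, B)).1).Nonempty :=
      ⟨_, exSet_swap_mem hne⟩
    rw [vminEx_of_nonempty hn hne', exSet_swap_min' hne hne']
    exact swapLe_involutive _ _
  · -- right inverse
    rintro ⟨A', B'⟩ hP
    rw [mem_filter] at hP
    obtain ⟨-, hA, hB⟩ := hP
    dsimp only at hA hB ⊢
    have hne : (ExSet d B' A').Nonempty := by
      refine ⟨⟨n - 1, by omega⟩, mem_exSet_iff.2 ?_⟩
      rw [cntLe_last _ hn, cntLe_last _ hn, hA, hB]
      omega
    rw [vminEx_of_nonempty hn hne]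
    set u := (ExSet d B' A').min' hne with hu
    set S := swapLe u (A', B') with hS
    have hne' : (ExSet d (swapLe u (B', A')).2 (swapLe u (B', A')).1).Nonempty :=
      ⟨_, exSet_swap_mem hne⟩
    have hne2 : (ExSet d S.1 S.2).Nonempty := hne'
    have hveq : vminEx hn d S.1 S.2 = u := by
      rw [vminEx_of_nonempty hn hne2]
      exact exSet_swap_min' hne hne'
    rw [hveq, hS]
    exact swapLe_involutive _ _
  · -- weights agree
    rintro ⟨A, B⟩ hP
    exact (prod_wt_swapLe _ _).symm

lemma all_sum (p q : ℕ) :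
    ∑ P ∈ (univ : Finset (Finset (Fin n) × Finset (Fin n))).filter
        (fun P => P.1.card = p ∧ P.2.card = q),
      ((∏ i ∈ P.1, (X i : MvPolynomial (Fin n) ℤ)) * ∏ i ∈ P.2, X i)
    = esymm (Fin n) ℤ p * esymm (Fin n) ℤ q := by
  rw [esymm, esymm, Finset.sum_mul_sum]
  have hset : (univ : Finset (Finset (Fin n) × Finset (Fin n))).filter
      (fun P => P.1.card = p ∧ P.2.card = q)
      = (powersetCard p (univ : Finset (Fin n))) ×ˢ (powersetCard q (univ : Finset (Fin n))) := by
    ext P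
    simp [Finset.mem_product, Finset.mem_powersetCard_univ]
  rw [hset, Finset.sum_product]

lemma good_sum (hn : 0 < n) (p q d : ℕ) (hdq : d + 1 ≤ q) (hqp : q ≤ p + d) :
    ∑ P ∈ (univ : Finset (Finset (Fin n) × Finset (Fin n))).filter
        (fun P => P.1.card = p ∧ P.2.card = q ∧ ¬ (ExSet d P.1 P.2).Nonempty),
      ((∏ i ∈ P.1, (X i : MvPolynomial (Fin n) ℤ)) * ∏ i ∈ P.2, X i)
    = esymm (Fin n) ℤ p * esymm (Fin n) ℤ q
      - esymm (Fin n) ℤ (p + d + 1) * esymm (Fin n) ℤ (q - d - 1) := by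
  have hsplit := Finset.sum_filter_add_sum_filter_not
    ((univ : Finset (Finset (Fin n) × Finset (Fin n))).filter
      (fun P => P.1.card = p ∧ P.2.card = q))
    (fun P => (ExSet d P.1 P.2).Nonempty)
    (fun P => (∏ i ∈ P.1, (X i : MvPolynomial (Fin n) ℤ)) * ∏ i ∈ P.2, X i)
  rw [filter_filter, filter_filter] at hsplit
  have e1 : ((univ : Finset (Finset (Fin n) × Finset (Fin n))).filter
      (fun P => (P.1.card = p ∧ P.2.card = q) ∧ (ExSet d P.1 P.2).Nonempty))
      = (univ.filter (fun P => P.1.card = p ∧ P.2.card = q ∧ (ExSet d P.1 P.2).Nonempty)) := by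
    apply filter_congr; intro P _; tauto
  have e2 : ((univ : Finset (Finset (Fin n) × Finset (Fin n))).filter
      (fun P => (P.1.card = p ∧ P.2.card = q) ∧ ¬ (ExSet d P.1 P.2).Nonempty))
      = (univ.filter (fun P => P.1.card = p ∧ P.2.card = q ∧ ¬ (ExSet d P.1 P.2).Nonempty)) := by
    apply filter_congr; intro P _; tauto
  rw [e1, e2] at hsplit
  rw [bad_sum hn p q d hdq hqp, all_sum p q] at hsplit
  rw [← all_sum (p + d + 1) (q - d - 1)]
  rw [eq_sub_iff_add_eq, add_comm]
  exact hsplit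
lemma orderEmbOfFin_le_iff {s : Finset (Fin n)} {m : ℕ} (h : s.card = m) (j : Fin m)
    (v : Fin n) : s.orderEmbOfFin h j ≤ v ↔ (j : ℕ) < cntLe s v := by
  constructor
  · intro hle
    have hinj : Set.InjOn (s.orderEmbOfFin h) (Finset.Iic j) :=
      (s.orderEmbOfFin h).injective.injOn
    have hsub : (Finset.Iic j).image (s.orderEmbOfFin h) ⊆ s.filter (· ≤ v) := by
      intro x hx
      simp only [mem_image, Finset.mem_Iic] at hx
      obtain ⟨i, hi, rfl⟩ := hx
      exact mem_filter.2 ⟨s.orderEmbOfFin_mem h i,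
        le_trans ((s.orderEmbOfFin h).monotone hi) hle⟩
    have := card_le_card hsub
    rwa [Finset.card_image_of_injective _ (s.orderEmbOfFin h).injective, Fin.card_Iic] at this
  · intro hlt
    by_contra hle
    push_neg at hle
    have hsub : s.filter (· ≤ v) ⊆ (Finset.Iio j).image (s.orderEmbOfFin h) := by
      intro x hx
      simp only [mem_filter] at hx
      obtain ⟨i, hi⟩ : ∃ i : Fin m, s.orderEmbOfFin h i = x := by
        have : x ∈ Set.range (s.orderEmbOfFin h) := by
          rw [Finset.range_orderEmbOfFin]; exact hx.1
        exact this
      refine mem_image.2 ⟨i, Finset.mem_Iio.2 ?_, hi⟩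
      by_contra hji
      push_neg at hji
      exact absurd (le_trans ((s.orderEmbOfFin h).monotone hji) (hi ▸ hx.2)) (not_le.2 hle)
    have := card_le_card hsub
    rw [Finset.card_image_of_injective _ (s.orderEmbOfFin h).injective, Fin.card_Iio] at this
    unfold cntLe at hlt
    omega

lemma exSet_nonempty_iff {p q d : ℕ} {A B : Finset (Fin n)} (hA : A.card = p)
    (hB : B.card = q) (hqp : q ≤ p + d) :
    (ExSet d A B).Nonempty ↔
      ∃ (j : ℕ) (h1 : d + j < q) (h2 : j < p),
        B.orderEmbOfFin hB ⟨d + j, h1⟩ < A.orderEmbOfFin hA ⟨j, h2⟩ := by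
  constructor
  · rintro ⟨v, hv⟩
    rw [mem_exSet_iff] at hv
    have hBq : cntLe B v ≤ q := hB ▸ cntLe_le_card B v
    have h1 : d + cntLe A v < q := by omega
    have h2 : cntLe A v < p := by omega
    refine ⟨cntLe A v, h1, h2, ?_⟩
    have hb : B.orderEmbOfFin hB ⟨d + cntLe A v, h1⟩ ≤ v := by
      rw [orderEmbOfFin_le_iff]
      simp only [Fin.val_mk]
      omega
    have ha : ¬ (A.orderEmbOfFin hA ⟨cntLe A v, h2⟩ ≤ v) := by
      rw [orderEmbOfFin_le_iff]
      simp only [Fin.val_mk]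
      omega
    exact lt_of_le_of_lt hb (not_le.1 ha)
  · rintro ⟨j, h1, h2, hlt⟩
    refine ⟨B.orderEmbOfFin hB ⟨d + j, h1⟩, mem_exSet_iff.2 ?_⟩
    set v := B.orderEmbOfFin hB ⟨d + j, h1⟩ with hv
    have hb : (d + j : ℕ) < cntLe B v := by
      rw [← orderEmbOfFin_le_iff hB ⟨d + j, h1⟩ v]
    have ha : cntLe A v ≤ j := by
      by_contra hc
      push_neg at hc
      have := (orderEmbOfFin_le_iff hA ⟨j, h2⟩ v).2 hc
      exact absurd hlt (not_lt.2 this)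
    omega

lemma fun_to_finset (p q : ℕ) (hn : 0 < n) (QF : Finset (Fin n) → Finset (Fin n) → Prop)
    [DecidablePred (fun T : (Fin p → Fin n) × (Fin q → Fin n) =>
      StrictMono T.1 ∧ StrictMono T.2 ∧ QF (image T.1 univ) (image T.2 univ))]
    [DecidablePred (fun P : Finset (Fin n) × Finset (Fin n) =>
      P.1.card = p ∧ P.2.card = q ∧ QF P.1 P.2)] :
    ∑ T ∈ (univ : Finset ((Fin p → Fin n) × (Fin q → Fin n))).filter
        (fun T => StrictMono T.1 ∧ StrictMono T.2 ∧ QF (image T.1 univ) (image T.2 univ)),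
      ((∏ j, (X (T.1 j) : MvPolynomial (Fin n) ℤ)) * ∏ i, X (T.2 i))
    = ∑ P ∈ (univ : Finset (Finset (Fin n) × Finset (Fin n))).filter
        (fun P => P.1.card = p ∧ P.2.card = q ∧ QF P.1 P.2),
      ((∏ i ∈ P.1, X i) * ∏ i ∈ P.2, X i) := by
  have key : ∀ (m : ℕ) (s : Finset (Fin n)) (h : s.card = m),
      (image (s.orderEmbOfFin h) univ) = s := by
    intro m s h
    apply Finset.coe_injective
    rw [coe_image, coe_univ, Set.image_univ]
    exact Finset.range_orderEmbOfFin s h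
  have cardim : ∀ (m : ℕ) (f : Fin m → Fin n), StrictMono f → (image f univ).card = m := by
    intro m f hf
    rw [Finset.card_image_of_injective _ hf.injective, card_univ, Fintype.card_fin]
  refine Finset.sum_nbij'
    (i := fun T => (image T.1 univ, image T.2 univ))
    (j := fun P => (if h : P.1.card = p then ⇑(P.1.orderEmbOfFin h) else fun _ => ⟨0, hn⟩,
                    if h : P.2.card = q then ⇑(P.2.orderEmbOfFin h) else fun _ => ⟨0, hn⟩))
    ?_ ?_ ?_ ?_ ?_
  · rintro ⟨L, R⟩ hT
    rw [mem_filter] at hT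
    obtain ⟨-, hL, hR, hQ⟩ := hT
    dsimp only at hL hR hQ ⊢
    rw [mem_filter]
    exact ⟨mem_univ _, cardim p L hL, cardim q R hR, hQ⟩
  · rintro ⟨A, B⟩ hP
    rw [mem_filter] at hP
    obtain ⟨-, hA, hB, hQ⟩ := hP
    dsimp only at hA hB hQ ⊢
    rw [mem_filter, dif_pos hA, dif_pos hB]
    refine ⟨mem_univ _, (A.orderEmbOfFin hA).strictMono, (B.orderEmbOfFin hB).strictMono, ?_⟩
    dsimp only
    rw [key p A hA, key q B hB]
    exact hQ
  · rintro ⟨L, R⟩ hT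
    rw [mem_filter] at hT
    obtain ⟨-, hL, hR, -⟩ := hT
    dsimp only at hL hR ⊢
    rw [dif_pos (cardim p L hL), dif_pos (cardim q R hR)]
    have e1 : L = ⇑((image L univ).orderEmbOfFin (cardim p L hL)) :=
      Finset.orderEmbOfFin_unique (cardim p L hL)
        (fun x => Finset.mem_image_of_mem _ (mem_univ x)) hL
    have e2 : R = ⇑((image R univ).orderEmbOfFin (cardim q R hR)) :=
      Finset.orderEmbOfFin_unique (cardim q R hR)
        (fun x => Finset.mem_image_of_mem _ (mem_univ x)) hR
    rw [← e1, ← e2]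
  · rintro ⟨A, B⟩ hP
    rw [mem_filter] at hP
    obtain ⟨-, hA, hB, -⟩ := hP
    dsimp only at hA hB ⊢
    rw [dif_pos hA, dif_pos hB]
    refine Prod.ext ?_ ?_ <;> dsimp only
    · exact key p A hA
    · exact key q B hB
  · rintro ⟨L, R⟩ hT
    rw [mem_filter] at hT
    obtain ⟨-, hL, hR, -⟩ := hT
    dsimp only at hL hR ⊢
    rw [Finset.prod_image (fun x _ y _ h => hL.injective h),
      Finset.prod_image (fun x _ y _ h => hR.injective h),
      Finset.prod_congr rfl (fun x _ => rfl), Finset.prod_congr rfl (fun x _ => rfl)]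

lemma exSet_nonempty_iff_fun {p q d : ℕ} (hqp : q ≤ p + d) {L : Fin p → Fin n}
    {R : Fin q → Fin n} (hL : StrictMono L) (hR : StrictMono R) :
    (ExSet d (image L univ) (image R univ)).Nonempty ↔
      ∃ (j : ℕ) (h1 : d + j < q) (h2 : j < p), R ⟨d + j, h1⟩ < L ⟨j, h2⟩ := by
  have cardL : (image L univ).card = p := by
    rw [Finset.card_image_of_injective _ hL.injective, card_univ, Fintype.card_fin]
  have cardR : (image R univ).card = q := by
    rw [Finset.card_image_of_injective _ hR.injective, card_univ, Fintype.card_fin]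
  have e1 : L = ⇑((image L univ).orderEmbOfFin cardL) :=
    Finset.orderEmbOfFin_unique cardL (fun x => Finset.mem_image_of_mem _ (mem_univ x)) hL
  have e2 : R = ⇑((image R univ).orderEmbOfFin cardR) :=
    Finset.orderEmbOfFin_unique cardR (fun x => Finset.mem_image_of_mem _ (mem_univ x)) hR
  rw [exSet_nonempty_iff cardL cardR hqp]
  constructor
  · rintro ⟨j, h1, h2, h⟩
    exact ⟨j, h1, h2, by rw [e1, e2]; exact h⟩
  · rintro ⟨j, h1, h2, h⟩
    exact ⟨j, h1, h2, by rw [← e1, ← e2]; exact h⟩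

section TopGlue

variable (nn a b c : ℕ)

lemma slides_anti {T : (Fin (a + c) → Fin nn) × (Fin (b + c) → Fin nn)} {m l : ℕ}
    (hR : Monotone T.2) (h : Slides nn a b c T m) (hlm : l ≤ m) : Slides nn a b c T l := by
  obtain ⟨hma, hmb, hcond⟩ := h
  refine ⟨le_trans hlm hma, le_trans hlm hmb, fun j hj h2 h3 => ?_⟩
  have hj' : j < c + m := by omega
  have h3' : b + j - m < b + c := by omega
  refine le_trans (hcond j hj' h2 h3') (hR (Fin.le_def.2 ?_))
  simp only [Fin.val_mk]
  omega

lemma slides_iff_not_exSet {m : ℕ} (hma : m ≤ a) (hmb : m ≤ b)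
    {T : (Fin (a + c) → Fin nn) × (Fin (b + c) → Fin nn)}
    (hL : StrictMono T.1) (hR : StrictMono T.2) :
    Slides nn a b c T m ↔
      ¬ (ExSet (b - m) (image T.1 univ) (image T.2 univ)).Nonempty := by
  rw [exSet_nonempty_iff_fun (show b + c ≤ (a + c) + (b - m) by omega) hL hR]
  constructor
  · rintro ⟨-, -, hs⟩ ⟨j, h1, h2, hlt⟩
    have hj : j < c + m := by omega
    have h3 : b + j - m < b + c := by omega
    have hle := hs j hj h2 h3
    have hidx : (⟨b + j - m, h3⟩ : Fin (b + c)) = ⟨(b - m) + j, h1⟩ := Fin.ext (by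
      simp only [Fin.val_mk]; omega)
    rw [hidx] at hle
    exact absurd hlt (not_lt.2 hle)
  · intro hno
    refine ⟨hma, hmb, fun j hj h2 h3 => ?_⟩
    by_contra hcon
    push_neg at hcon
    have h1 : (b - m) + j < b + c := by omega
    refine hno ⟨j, h1, h2, ?_⟩
    have hidx : (⟨(b - m) + j, h1⟩ : Fin (b + c)) = ⟨b + j - m, h3⟩ := Fin.ext (by
      simp only [Fin.val_mk]; omega)
    rw [hidx]
    exact hcon

lemma ch_sum_pred (pred : ((Fin (a + c) → Fin nn) × (Fin (b + c) → Fin nn)) → Prop)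
    [DecidablePred pred] :
    ∑ᶠ T ∈ {T | pred T}, ((∏ j, (X (T.1 j) : MvPolynomial (Fin nn) ℤ)) * ∏ i, X (T.2 i))
    = ∑ T ∈ (univ : Finset ((Fin (a + c) → Fin nn) × (Fin (b + c) → Fin nn))).filter pred,
        ((∏ j, X (T.1 j)) * ∏ i, X (T.2 i)) := by
  have hset : {T | pred T} = ((univ.filter pred :
      Finset ((Fin (a + c) → Fin nn) × (Fin (b + c) → Fin nn))) : Set _) := by
    ext T; simp
  rw [hset, finsum_mem_coe_finset]

open scoped Classical in
lemma ch_GSet (hn : 0 < nn) {m : ℕ} (hma : m ≤ a) (hmb : m ≤ b) (hcm : 1 ≤ c + m) :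
    ∑ᶠ T ∈ {T : (Fin (a + c) → Fin nn) × (Fin (b + c) → Fin nn) |
        StrictMono T.1 ∧ StrictMono T.2 ∧ Slides nn a b c T m},
      ((∏ j, (X (T.1 j) : MvPolynomial (Fin nn) ℤ)) * ∏ i, X (T.2 i))
    = esymm (Fin nn) ℤ (a + c) * esymm (Fin nn) ℤ (b + c)
      - esymm (Fin nn) ℤ (a + b + c - m + 1) * esymm (Fin nn) ℤ (c + m - 1) := by
  rw [ch_sum_pred]
  have hfe : (univ : Finset ((Fin (a + c) → Fin nn) × (Fin (b + c) → Fin nn))).filter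
        (fun T => StrictMono T.1 ∧ StrictMono T.2 ∧ Slides nn a b c T m)
      = univ.filter (fun T => StrictMono T.1 ∧ StrictMono T.2 ∧
          (fun A B => ¬ (ExSet (b - m) A B).Nonempty) (image T.1 univ) (image T.2 univ)) := by
    ext T
    simp only [mem_filter, mem_univ, true_and]
    constructor
    · rintro ⟨hL, hR, hs⟩
      exact ⟨hL, hR, (slides_iff_not_exSet nn a b c hma hmb hL hR).1 hs⟩
    · rintro ⟨hL, hR, hs⟩
      exact ⟨hL, hR, (slides_iff_not_exSet nn a b c hma hmb hL hR).2 hs⟩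
  have i1 : (a + c) + (b - m) + 1 = a + b + c - m + 1 := by omega
  have i2 : (b + c) - (b - m) - 1 = c + m - 1 := by omega
  rw [← i1, ← i2]
  refine (Finset.sum_congr hfe fun _ _ => rfl).trans
    ((fun_to_finset (a + c) (b + c) hn (fun A B => ¬ (ExSet (b - m) A B).Nonempty)).trans
      ((Finset.sum_congr ?_ fun _ _ => rfl).trans
        (good_sum hn (a + c) (b + c) (b - m) (by omega) (by omega))))
  ext P
  simp only [mem_filter]

open scoped Classical in
lemma ch_GSet_vac (hn : 0 < nn) (hc : c = 0) :
    ∑ᶠ T ∈ {T : (Fin (a + c) → Fin nn) × (Fin (b + c) → Fin nn) |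
        StrictMono T.1 ∧ StrictMono T.2 ∧ Slides nn a b c T 0},
      ((∏ j, (X (T.1 j) : MvPolynomial (Fin nn) ℤ)) * ∏ i, X (T.2 i))
    = esymm (Fin nn) ℤ (a + c) * esymm (Fin nn) ℤ (b + c) := by
  rw [ch_sum_pred]
  have hfe : (univ : Finset ((Fin (a + c) → Fin nn) × (Fin (b + c) → Fin nn))).filter
        (fun T => StrictMono T.1 ∧ StrictMono T.2 ∧ Slides nn a b c T 0)
      = univ.filter (fun T => StrictMono T.1 ∧ StrictMono T.2 ∧
          (fun _ _ => True) (image T.1 univ) (image T.2 univ)) := by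
    ext T
    simp only [mem_filter, mem_univ, true_and]
    constructor
    · rintro ⟨hL, hR, -⟩
      exact ⟨hL, hR, trivial⟩
    · rintro ⟨hL, hR, -⟩
      refine ⟨hL, hR, Nat.zero_le a, Nat.zero_le b, fun j hj h2 h3 => ?_⟩
      exact absurd hj (by omega)
  refine (Finset.sum_congr hfe fun _ _ => rfl).trans
    ((fun_to_finset (a + c) (b + c) hn (fun _ _ => True)).trans
      ((Finset.sum_congr ?_ fun _ _ => rfl).trans (all_sum (a + c) (b + c))))
  ext P
  simp only [mem_filter]
  tauto


lemma resid_set_eq {k : ℕ} (hka : k ≤ a) (hkb : k ≤ b) :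
    {T : (Fin (a + c) → Fin nn) × (Fin (b + c) → Fin nn) |
        IsTab nn a b c T ∧ tabResidue nn a b c T = k}
      = {T | StrictMono T.1 ∧ StrictMono T.2 ∧ Slides nn a b c T k}
        \ {T | StrictMono T.1 ∧ StrictMono T.2 ∧ Slides nn a b c T (k + 1)} := by
  ext T
  simp only [Set.mem_setOf_eq, Set.mem_diff]
  constructor
  · rintro ⟨⟨hL, hR, hcond⟩, hres⟩
    have h0 : Slides nn a b c T 0 :=
      ⟨Nat.zero_le _, Nat.zero_le _, fun j hj h2 h3 => hcond j hj h2 h3⟩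
    have hbdd : BddAbove {m | Slides nn a b c T m} := ⟨a, fun m hm => hm.1⟩
    have hne : {m | Slides nn a b c T m}.Nonempty := ⟨0, h0⟩
    have hmem : tabResidue nn a b c T ∈ {m | Slides nn a b c T m} := by
      exact Nat.sSup_mem hne hbdd
    rw [hres] at hmem
    refine ⟨⟨hL, hR, hmem⟩, ?_⟩
    rintro ⟨-, -, hs⟩
    have hle : k + 1 ≤ tabResidue nn a b c T := le_csSup hbdd hs
    omega
  · rintro ⟨⟨hL, hR, hsk⟩, hnot⟩
    have hs0 : Slides nn a b c T 0 :=
      slides_anti nn a b c hR.monotone hsk (Nat.zero_le k)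
    have htab : IsTab nn a b c T := ⟨hL, hR, fun j hj h2 h3 => hs0.2.2 j hj h2 h3⟩
    have hns : ¬ Slides nn a b c T (k + 1) := fun hs => hnot ⟨hL, hR, hs⟩
    refine ⟨htab, ?_⟩
    have hub : ∀ m ∈ {m | Slides nn a b c T m}, m ≤ k := by
      intro m hm
      by_contra hmk
      push_neg at hmk
      exact hns (slides_anti nn a b c hR.monotone hm (by omega))
    exact le_antisymm (csSup_le ⟨k, hsk⟩ hub) (le_csSup ⟨a, fun m hm => hm.1⟩ hsk)

end TopGlue

lemma finsum_set_diff {α : Type*} [Fintype α] {S1 S2 : Set α} (hsub : S2 ⊆ S1)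
    (f : α → MvPolynomial (Fin n) ℤ) :
    ∑ᶠ T ∈ S1 \ S2, f T = (∑ᶠ T ∈ S1, f T) - ∑ᶠ T ∈ S2, f T := by
  classical
  have h1 : S1.Finite := Set.toFinite _
  have h2 : S2.Finite := Set.toFinite _
  have hd : (S1 \ S2).Finite := Set.toFinite _
  rw [finsum_mem_eq_finite_toFinset_sum _ hd, finsum_mem_eq_finite_toFinset_sum _ h1,
    finsum_mem_eq_finite_toFinset_sum _ h2]
  have he : hd.toFinset = h1.toFinset \ h2.toFinset := by
    ext x
    simp only [Set.Finite.mem_toFinset, Finset.mem_sdiff, Set.mem_diff]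
  rw [he, eq_sub_iff_add_eq]
  refine Finset.sum_sdiff ?_
  intro x hx
  simp only [Set.Finite.mem_toFinset] at hx ⊢
  exact hsub hx

lemma eZ_coe (nn m : ℕ) : eZ nn (m : ℤ) = esymm (Fin nn) ℤ m := by
  unfold eZ
  rw [if_pos (Int.natCast_nonneg m), Int.toNat_natCast]
/-- For all `a, b, c ≥ 0` and every integer `k` with `0 ≤ k ≤ min{a,b}`, the weight generating
function of the set of semistandard tableaux of shape `λ(a,b,c)` with entries in `{1,…,n}` and
residue `𝔯_T = k` equals `e_{a+b+c−k}·e_{c+k} − e_{a+b+c−k+1}·e_{c+k−1}` in `ℤ[x_1,…,x_n]`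
(the dual Jacobi–Trudi expression for the Schur polynomial `s_{(a+b+c−k, c+k)'}`). -/
theorem ch_residue_eq (n : ℕ) (hn : 1 ≤ n) (a b c k : ℕ) (hka : k ≤ a) (hkb : k ≤ b) :
    tabCh n a b c {T | IsTab n a b c T ∧ tabResidue n a b c T = k} =
      eZ n ((a : ℤ) + b + c - k) * eZ n ((c : ℤ) + k)
        - eZ n ((a : ℤ) + b + c - k + 1) * eZ n ((c : ℤ) + k - 1) := by
  have hn0 : 0 < n := hn
  rw [resid_set_eq n a b c hka hkb]
  have hsub : {T : (Fin (a + c) → Fin n) × (Fin (b + c) → Fin n) |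
        StrictMono T.1 ∧ StrictMono T.2 ∧ Slides n a b c T (k + 1)}
      ⊆ {T | StrictMono T.1 ∧ StrictMono T.2 ∧ Slides n a b c T k} := by
    rintro T ⟨hL, hR, hs⟩
    exact ⟨hL, hR, slides_anti n a b c hR.monotone hs (by omega)⟩
  unfold tabCh
  rw [finsum_set_diff hsub]
  -- rewrite the eZ's
  have E1 : eZ n ((a : ℤ) + b + c - k) = esymm (Fin n) ℤ (a + b + c - k) := by
    rw [show (a : ℤ) + b + c - k = ((a + b + c - k : ℕ) : ℤ) from by omega, eZ_coe]
  have E3 : eZ n ((a : ℤ) + b + c - k + 1) = esymm (Fin n) ℤ (a + b + c - k + 1) := by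
    rw [show (a : ℤ) + b + c - k + 1 = ((a + b + c - k + 1 : ℕ) : ℤ) from by omega, eZ_coe]
  have E2 : eZ n ((c : ℤ) + k) = esymm (Fin n) ℤ (c + k) := by
    rw [show (c : ℤ) + k = ((c + k : ℕ) : ℤ) from by omega, eZ_coe]
  rw [E1, E2, E3]
  by_cases hK : k + 1 ≤ a ∧ k + 1 ≤ b
  · have hG2 : ∑ᶠ T ∈ {T : (Fin (a + c) → Fin n) × (Fin (b + c) → Fin n) |
          StrictMono T.1 ∧ StrictMono T.2 ∧ Slides n a b c T (k + 1)}, tabWt n a b c T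
        = esymm (Fin n) ℤ (a + c) * esymm (Fin n) ℤ (b + c)
          - esymm (Fin n) ℤ (a + b + c - (k + 1) + 1) * esymm (Fin n) ℤ (c + (k + 1) - 1) :=
      ch_GSet n a b c hn0 hK.1 hK.2 (by omega)
    rw [hG2, show a + b + c - (k + 1) + 1 = a + b + c - k from by omega,
      show c + (k + 1) - 1 = c + k from by omega]
    by_cases hc1 : c + k = 0
    · have hc0 : c = 0 := by omega
      have hk0 : k = 0 := by omega
      have E4 : eZ n ((c : ℤ) + k - 1) = 0 := by
        rw [show (c : ℤ) + k - 1 = -1 from by omega]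
        unfold eZ
        rw [if_neg (by norm_num)]
      rw [E4]
      subst hk0
      have hG1 : ∑ᶠ T ∈ {T : (Fin (a + c) → Fin n) × (Fin (b + c) → Fin n) |
            StrictMono T.1 ∧ StrictMono T.2 ∧ Slides n a b c T 0}, tabWt n a b c T
          = esymm (Fin n) ℤ (a + c) * esymm (Fin n) ℤ (b + c) :=
        ch_GSet_vac n a b c hn0 hc0
      rw [hG1]
      ring
    · have E4 : eZ n ((c : ℤ) + k - 1) = esymm (Fin n) ℤ (c + k - 1) := by
        rw [show (c : ℤ) + k - 1 = ((c + k - 1 : ℕ) : ℤ) from by omega, eZ_coe]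
      rw [E4]
      have hG1 : ∑ᶠ T ∈ {T : (Fin (a + c) → Fin n) × (Fin (b + c) → Fin n) |
            StrictMono T.1 ∧ StrictMono T.2 ∧ Slides n a b c T k}, tabWt n a b c T
          = esymm (Fin n) ℤ (a + c) * esymm (Fin n) ℤ (b + c)
            - esymm (Fin n) ℤ (a + b + c - k + 1) * esymm (Fin n) ℤ (c + k - 1) :=
        ch_GSet n a b c hn0 hka hkb (by omega)
      rw [hG1]
      ring
  · have hset : {T : (Fin (a + c) → Fin n) × (Fin (b + c) → Fin n) |
          StrictMono T.1 ∧ StrictMono T.2 ∧ Slides n a b c T (k + 1)} = (∅ : Set _) := by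
      ext T
      simp only [Set.mem_setOf_eq, Set.mem_empty_iff_false, iff_false]
      rintro ⟨-, -, hs⟩
      exact hK ⟨hs.1, hs.2.1⟩
    rw [hset, finsum_mem_empty, sub_zero]
    by_cases hc1 : c + k = 0
    · have hc0 : c = 0 := by omega
      have hk0 : k = 0 := by omega
      have E4 : eZ n ((c : ℤ) + k - 1) = 0 := by
        rw [show (c : ℤ) + k - 1 = -1 from by omega]
        unfold eZ
        rw [if_neg (by norm_num)]
      rw [E4]
      subst hk0
      have hG1 : ∑ᶠ T ∈ {T : (Fin (a + c) → Fin n) × (Fin (b + c) → Fin n) |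
            StrictMono T.1 ∧ StrictMono T.2 ∧ Slides n a b c T 0}, tabWt n a b c T
          = esymm (Fin n) ℤ (a + c) * esymm (Fin n) ℤ (b + c) :=
        ch_GSet_vac n a b c hn0 hc0
      rw [hG1]
      have hor : a = 0 ∨ b = 0 := by omega
      rcases hor with ha | hb
      · rw [show a + c = c + 0 from by omega, show b + c = a + b + c - 0 from by omega]
        ring
      · rw [show b + c = c + 0 from by omega, show a + c = a + b + c - 0 from by omega]
        try ring
    · have E4 : eZ n ((c : ℤ) + k - 1) = esymm (Fin n) ℤ (c + k - 1) := by
        rw [show (c : ℤ) + k - 1 = ((c + k - 1 : ℕ) : ℤ) from by omega, eZ_coe]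
      rw [E4]
      have hG1 : ∑ᶠ T ∈ {T : (Fin (a + c) → Fin n) × (Fin (b + c) → Fin n) |
            StrictMono T.1 ∧ StrictMono T.2 ∧ Slides n a b c T k}, tabWt n a b c T
          = esymm (Fin n) ℤ (a + c) * esymm (Fin n) ℤ (b + c)
            - esymm (Fin n) ℤ (a + b + c - k + 1) * esymm (Fin n) ℤ (c + k - 1) :=
        ch_GSet n a b c hn0 hka hkb (by omega)
      rw [hG1]
      have hor : k = a ∨ k = b := by omega
      rcases hor with hA | hB
      · rw [show a + c = c + k from by omega, show b + c = a + b + c - k from by omega]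
        ring
      · rw [show b + c = c + k from by omega, show a + c = a + b + c - k from by omega]
        try ring
end

section
/- For all a, b, c ≥ 0 and every integer k with 0 ≤ k ≤ min{a,b}, the weight generating function of semistandard tableaux of shape λ(a,b,c) with entries in {1,…,n} and residue exactly k equals the weight generating function of semistandard tableaux of shape λ(a−k, b−k, c+k) with entries in {1,…,n} and residue exactly 0: ch SST_n(λ(a,b,c))_{(k)} = ch SST_n(λ(a−k,b−k,c+k))_{(0)} in ℤ[x_1,…,x_n]. -/
open MvPolynomial

/-!
In the encoding `T = (L, R)`, passing from `λ(a,b,c)` to `λ(a-k, b-k, c+k)` changes nothing but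
how the column heights are written: `a + c = (a - k) + (c + k)` and `b + c = (b - k) + (c + k)`.
Under this relabelling, sliding `R` down by `k + m` in the old shape is sliding it down by `m` in
the new one. So `T` has residue `k` exactly when its relabelling is semistandard of residue `0`,
and the weight is unchanged.
-/

section

variable {n : ℕ}

lemma strictMono_comp_finCast_iff {p q : ℕ} (h : p = q) (f : Fin q → Fin n) :
    StrictMono (f ∘ Fin.cast h) ↔ StrictMono f :=
  ⟨fun hf => hf.comp (Fin.cast_strictMono h.symm), fun hf => hf.comp (Fin.cast_strictMono h)⟩

lemma isTab_iff_slides_zero {a b c : ℕ} (T : (Fin (a + c) → Fin n) × (Fin (b + c) → Fin n)) :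
    IsTab n a b c T ↔ StrictMono T.1 ∧ StrictMono T.2 ∧ Slides n a b c T 0 := by
  refine and_congr_right fun _ => and_congr_right fun _ => ?_
  exact ⟨fun h => ⟨Nat.zero_le a, Nat.zero_le b, fun j hj h2 _ => h j hj h2 (by omega)⟩,
    fun h j hj h2 _ => h.2.2 j hj h2 (by omega)⟩

lemma isGreatest_setOf_zero_iff_of_shift {P Q : ℕ → Prop} {k : ℕ} (h : ∀ m, P m ↔ Q (k + m)) :
    IsGreatest {m | P m} 0 ↔ IsGreatest {m | Q m} k := by
  refine and_congr (h 0) ⟨fun hP m hm => ?_, fun hQ m hm => ?_⟩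
  · by_contra! hkm
    have := hP ((h (m - k)).2 (by rwa [Nat.add_sub_cancel' hkm.le]))
    omega
  · have := hQ ((h m).1 hm)
    omega

lemma Slides.mono {a b c m l : ℕ} {T : (Fin (a + c) → Fin n) × (Fin (b + c) → Fin n)}
    (h : Slides n a b c T m) (hR : Monotone T.2) (hlm : l ≤ m) : Slides n a b c T l :=
  ⟨by have := h.1; omega, by have := h.2.1; omega, fun j hj h2 _ =>
    (h.2.2 j (by omega) h2 (by have := h.2.1; omega)).trans (hR (Fin.mk_le_mk.2 (by omega)))⟩

lemma tabResidue_eq_iff {a b c k : ℕ} {T : (Fin (a + c) → Fin n) × (Fin (b + c) → Fin n)}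
    (h0 : Slides n a b c T 0) :
    tabResidue n a b c T = k ↔ IsGreatest {m | Slides n a b c T m} k := by
  have hbdd : BddAbove {m | Slides n a b c T m} := ⟨a, fun _ hm => hm.1⟩
  refine ⟨?_, IsGreatest.csSup_eq⟩
  rintro rfl
  exact ⟨Nat.sSup_mem ⟨0, h0⟩ hbdd, fun _ hm => le_csSup hbdd hm⟩

def tabCast {p q p' q' : ℕ} (hp : p' = p) (hq : q' = q) :
    (Fin p → Fin n) × (Fin q → Fin n) ≃ (Fin p' → Fin n) × (Fin q' → Fin n) where
  toFun T := (T.1 ∘ Fin.cast hp, T.2 ∘ Fin.cast hq)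
  invFun U := (U.1 ∘ Fin.cast hp.symm, U.2 ∘ Fin.cast hq.symm)
  left_inv _ := rfl
  right_inv _ := rfl

lemma tabWt_tabCast {a b c a' b' c' : ℕ} (hp : a' + c' = a + c) (hq : b' + c' = b + c)
    (T : (Fin (a + c) → Fin n) × (Fin (b + c) → Fin n)) :
    tabWt n a' b' c' (tabCast hp hq T) = tabWt n a b c T := by
  unfold tabWt
  congr 1
  · exact Fintype.prod_equiv (finCongr hp) _ _ fun _ => rfl
  · exact Fintype.prod_equiv (finCongr hq) _ _ fun _ => rfl

lemma tabCh_eq_of_tabCast {a b c a' b' c' : ℕ} (hp : a' + c' = a + c) (hq : b' + c' = b + c)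
    (S : Set ((Fin (a + c) → Fin n) × (Fin (b + c) → Fin n)))
    (S' : Set ((Fin (a' + c') → Fin n) × (Fin (b' + c') → Fin n)))
    (hS : ∀ T, tabCast hp hq T ∈ S' ↔ T ∈ S) :
    tabCh n a b c S = tabCh n a' b' c' S' :=
  finsum_mem_eq_of_bijOn _ ((tabCast hp hq).bijOn hS) fun T _ => (tabWt_tabCast hp hq T).symm

lemma slides_tabCast_iff {a b c k : ℕ} (hp : a - k + (c + k) = a + c)
    (hq : b - k + (c + k) = b + c) (T : (Fin (a + c) → Fin n) × (Fin (b + c) → Fin n)) (m : ℕ) :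
    Slides n (a - k) (b - k) (c + k) (tabCast hp hq T) m ↔ Slides n a b c T (k + m) := by
  simp only [Slides, tabCast, Equiv.coe_fn_mk, Function.comp_apply, Fin.cast_mk]
  refine and_congr (by omega) (and_congr (by omega) ⟨fun h j _ _ _ => ?_, fun h j _ _ _ => ?_⟩) <;>
  · convert h j (by omega) (by omega) (by omega) using 3
    omega

lemma isTab_and_tabResidue_tabCast_iff {a b c k : ℕ} (hp : a - k + (c + k) = a + c)
    (hq : b - k + (c + k) = b + c) (T : (Fin (a + c) → Fin n) × (Fin (b + c) → Fin n)) :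
    (IsTab n (a - k) (b - k) (c + k) (tabCast hp hq T) ∧
        tabResidue n (a - k) (b - k) (c + k) (tabCast hp hq T) = 0) ↔
      (IsTab n a b c T ∧ tabResidue n a b c T = k) := by
  have hS := slides_tabCast_iff hp hq T
  have hmono : (StrictMono (tabCast hp hq T).1 ∧ StrictMono (tabCast hp hq T).2) ↔
      (StrictMono T.1 ∧ StrictMono T.2) :=
    and_congr (strictMono_comp_finCast_iff hp T.1) (strictMono_comp_finCast_iff hq T.2)
  rw [isTab_iff_slides_zero, isTab_iff_slides_zero, ← and_assoc, ← and_assoc, hmono]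
  constructor
  · rintro ⟨⟨hT, h0'⟩, hres'⟩
    rw [tabResidue_eq_iff h0', isGreatest_setOf_zero_iff_of_shift hS] at hres'
    have h0 : Slides n a b c T 0 := hres'.1.mono hT.2.monotone (Nat.zero_le k)
    exact ⟨⟨hT, h0⟩, (tabResidue_eq_iff h0).2 hres'⟩
  · rintro ⟨⟨hT, h0⟩, hres⟩
    rw [tabResidue_eq_iff h0] at hres
    have h0' : Slides n (a - k) (b - k) (c + k) (tabCast hp hq T) 0 := (hS 0).2 hres.1
    exact ⟨⟨hT, h0'⟩, (tabResidue_eq_iff h0').2 ((isGreatest_setOf_zero_iff_of_shift hS).2 hres)⟩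

end

theorem ch_residue_shift_general (n : ℕ) (a b c k : ℕ) (hka : k ≤ a) (hkb : k ≤ b) :
    tabCh n a b c {T | IsTab n a b c T ∧ tabResidue n a b c T = k} =
      tabCh n (a - k) (b - k) (c + k)
        {T | IsTab n (a - k) (b - k) (c + k) T ∧
          tabResidue n (a - k) (b - k) (c + k) T = 0} :=
  tabCh_eq_of_tabCast (by omega) (by omega) _ _ (isTab_and_tabResidue_tabCast_iff _ _)

/-- For all `a, b, c ≥ 0` and every `k` with `0 ≤ k ≤ min{a,b}`:
`ch SST_n(λ(a,b,c))_{(k)} = ch SST_n(λ(a−k,b−k,c+k))_{(0)}` in `ℤ[x_1,…,x_n]`. -/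
theorem ch_residue_shift (n : ℕ) (hn : 1 ≤ n) (a b c k : ℕ) (hka : k ≤ a) (hkb : k ≤ b) :
    tabCh n a b c {T | IsTab n a b c T ∧ tabResidue n a b c T = k} =
      tabCh n (a - k) (b - k) (c + k)
        {T | IsTab n (a - k) (b - k) (c + k) T ∧
          tabResidue n (a - k) (b - k) (c + k) T = 0} :=
  ch_residue_shift_general n a b c k hka hkb
end

section
/- For every a ≥ 0, the sum over all c ≥ 0 of the weight generating functions of semistandard tableaux of shape λ(a,0,c) with entries in {1,…,n} equals E_a − E_{a+2} in ℤ[x_1,…,x_n]: Σ_{c≥0} ch SST_n(λ(a,0,c)) = E_a − E_{a+2}. (Since b = 0, every such tableau automatically has residue 0, and the summands vanish for c > n, so the sum is finite.) -/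
open MvPolynomial

/-!
For `b = 0` a tableau is a pair of strictly increasing columns, i.e. a pair of subsets `A, B` of
`Fin n` with `#A = a + c` and `#B = c`, and read increasingly the row condition becomes the
dominance `#{x ∈ B | x ≤ t} ≤ #{x ∈ A | x ≤ t}` for all `t`. All pairs together contribute
`e_{a+c} e_c`. Exchanging the parts of `A` and `B` up to the least `t` where dominance fails is a
weight-preserving bijection from the non-dominated pairs onto all pairs of sizes `(a+c+1, c-1)`,
so the summand for `c` is `e_c e_{a+c} - e_{c-1} e_{a+2+(c-1)}`, and summing over `c` gives
`E_a - E_{a+2}`.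
-/

open Finset

section Dominance

variable {α : Type*} [LinearOrder α]

def countLE (A : Finset α) (t : α) : ℕ := #{x ∈ A | x ≤ t}

def Dominates (A B : Finset α) : Prop := ∀ t, countLE B t ≤ countLE A t

lemma le_iff_lt_countLE_image {p : ℕ} {f : Fin p → α} (hf : StrictMono f) (t : α) (j : Fin p) :
    f j ≤ t ↔ (j : ℕ) < countLE (univ.image f) t := by
  have hcount : countLE (univ.image f) t = #(univ.filter fun i => f i ≤ t) := by
    rw [countLE, filter_image, card_image_of_injective _ hf.injective]
  rw [hcount]
  constructor
  · intro hj
    have hsub : Iic j ⊆ univ.filter fun i => f i ≤ t := fun i hi =>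
      mem_filter.2 ⟨mem_univ i, (hf.monotone (mem_Iic.1 hi)).trans hj⟩
    simpa using card_le_card hsub
  · intro hj
    by_contra! htj
    have hsub : (univ.filter fun i => f i ≤ t) ⊆ Iio j := fun i hi =>
      mem_Iio.2 (hf.lt_iff_lt.1 ((mem_filter.1 hi).2.trans_lt htj))
    have := card_le_card hsub
    rw [Fin.card_Iio] at this
    omega

lemma forall_le_iff_dominates {p q : ℕ} {f : Fin p → α} {g : Fin q → α}
    (hf : StrictMono f) (hg : StrictMono g) (hqp : q ≤ p) :
    (∀ (j : ℕ) (hq : j < q) (hp : j < p), f ⟨j, hp⟩ ≤ g ⟨j, hq⟩) ↔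
      Dominates (univ.image f) (univ.image g) := by
  constructor
  · intro h t
    set m := countLE (univ.image g) t
    obtain hm | hm := Nat.eq_zero_or_pos m
    · omega
    have hmq : m ≤ q :=
      (card_filter_le _ _).trans_eq (by simp [card_image_of_injective _ hg.injective])
    have hgt : g ⟨m - 1, by omega⟩ ≤ t := (le_iff_lt_countLE_image hg t _).2 (by simp; omega)
    have hft := (le_iff_lt_countLE_image hf t ⟨m - 1, by omega⟩).1 ((h _ _ _).trans hgt)
    simp only at hft
    omega
  · intro h j hq hp
    have hj := (le_iff_lt_countLE_image hg (g ⟨j, hq⟩) ⟨j, hq⟩).1 le_rfl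
    exact (le_iff_lt_countLE_image hf _ ⟨j, hp⟩).2 (hj.trans_le (h _))

end Dominance

section Swap

variable {α : Type*} [LinearOrder α]

def swapBelow (t : α) (A B : Finset α) : Finset α := {x ∈ B | x ≤ t} ∪ {x ∈ A | ¬x ≤ t}

lemma filter_le_swapBelow {s t : α} (hst : s ≤ t) (A B : Finset α) :
    {x ∈ swapBelow t A B | x ≤ s} = {x ∈ B | x ≤ s} := by
  ext x
  simp only [swapBelow, mem_filter, mem_union]
  constructor
  · rintro ⟨⟨hB, -⟩ | ⟨-, hxt⟩, hxs⟩
    · exact ⟨hB, hxs⟩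
    · exact absurd (hxs.trans hst) hxt
  · rintro ⟨hB, hxs⟩
    exact ⟨Or.inl ⟨hB, hxs.trans hst⟩, hxs⟩

lemma countLE_swapBelow {s t : α} (hst : s ≤ t) (A B : Finset α) :
    countLE (swapBelow t A B) s = countLE B s := by
  rw [countLE, filter_le_swapBelow hst, countLE]

lemma swapBelow_swapBelow (t : α) (A B : Finset α) :
    swapBelow t (swapBelow t A B) (swapBelow t B A) = A := by
  ext x
  simp only [swapBelow, mem_union, mem_filter]
  tauto

lemma disjoint_filter_le_filter_not_le (t : α) (A B : Finset α) :
    Disjoint {x ∈ B | x ≤ t} {x ∈ A | ¬x ≤ t} :=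
  disjoint_left.2 fun _ hB hA => (mem_filter.1 hA).2 (mem_filter.1 hB).2

lemma card_swapBelow_add (t : α) (A B : Finset α) :
    #(swapBelow t A B) + countLE A t = countLE B t + #A := by
  rw [swapBelow, card_union_of_disjoint (disjoint_filter_le_filter_not_le t A B), countLE,
    countLE, add_assoc, add_comm #{x ∈ A | ¬x ≤ t}, card_filter_add_card_filter_not]

lemma prod_swapBelow_mul_prod_swapBelow {M : Type*} [CommMonoid M] (w : α → M) (t : α)
    (A B : Finset α) :
    (∏ x ∈ swapBelow t A B, w x) * ∏ x ∈ swapBelow t B A, w x =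
      (∏ x ∈ A, w x) * ∏ x ∈ B, w x := by
  simp only [swapBelow, prod_union (disjoint_filter_le_filter_not_le t _ _),
    ← prod_filter_mul_prod_filter_not A (· ≤ t), ← prod_filter_mul_prod_filter_not B (· ≤ t)]
  ac_rfl

lemma card_filter_lt_le_of_forall_lt {A B : Finset α} {t : α}
    (h : ∀ s < t, countLE B s ≤ countLE A s) : #{x ∈ B | x < t} ≤ #{x ∈ A | x < t} := by
  obtain hB | hB := (B.filter (· < t)).eq_empty_or_nonempty
  · simp [hB]
  set s := (B.filter (· < t)).max' hB
  have hst : s < t := (mem_filter.1 ((B.filter (· < t)).max'_mem hB)).2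
  have hBs : {x ∈ B | x < t} = {x ∈ B | x ≤ s} := by
    ext x
    simp only [mem_filter, and_congr_right_iff]
    intro hx
    exact ⟨fun hxt => le_max' _ x (mem_filter.2 ⟨hx, hxt⟩), fun hxs => hxs.trans_lt hst⟩
  calc #{x ∈ B | x < t} = countLE B s := by rw [hBs, countLE]
    _ ≤ countLE A s := h s hst
    _ ≤ #{x ∈ A | x < t} := card_le_card fun x hx =>
        mem_filter.2 ⟨(mem_filter.1 hx).1, (mem_filter.1 hx).2.trans_lt hst⟩

variable [Fintype α]

instance (A B : Finset α) : Decidable (Dominates A B) :=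
  inferInstanceAs (Decidable (∀ t, countLE B t ≤ countLE A t))

def violations (A B : Finset α) : Finset α := {t | countLE A t < countLE B t}

lemma violations_nonempty_iff {A B : Finset α} : (violations A B).Nonempty ↔ ¬Dominates A B := by
  simp [violations, Dominates, filter_nonempty_iff]

/-- Up to its least violation `t` the count of `B` can only overtake that of `A` at `t` itself,
and there by exactly one. -/
lemma countLE_eq_succ_of_isLeast {A B : Finset α} {t : α}
    (ht : IsLeast (violations A B : Set α) t) : countLE B t = countLE A t + 1 := by
  have hviol : countLE A t < countLE B t := (mem_filter.1 ht.1).2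
  have hbelow : #{x ∈ B | x < t} ≤ #{x ∈ A | x < t} :=
    card_filter_lt_le_of_forall_lt fun s hst => not_lt.1 fun hs =>
      (ht.2 (mem_filter.2 ⟨mem_univ s, hs⟩)).not_gt hst
  have hB : countLE B t ≤ #{x ∈ B | x < t} + 1 := by
    refine (card_le_card fun x hx => ?_).trans (card_insert_le t _)
    obtain ⟨hxB, hxt⟩ := mem_filter.1 hx
    obtain rfl | hxt := hxt.eq_or_lt
    · exact mem_insert_self _ _
    · exact mem_insert_of_mem (mem_filter.2 ⟨hxB, hxt⟩)
  have hA : #{x ∈ A | x < t} ≤ countLE A t :=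
    card_le_card fun x hx => mem_filter.2 ⟨(mem_filter.1 hx).1, (mem_filter.1 hx).2.le⟩
  omega

lemma isLeast_violations_swapBelow {A B : Finset α} {t : α}
    (ht : IsLeast (violations A B : Set α) t) :
    IsLeast (violations (swapBelow t B A) (swapBelow t A B) : Set α) t := by
  have hiff : ∀ s ≤ t, s ∈ violations (swapBelow t B A) (swapBelow t A B) ↔
      s ∈ violations A B := by
    intro s hst
    simp [violations, countLE_swapBelow hst]
  refine ⟨(hiff t le_rfl).2 ht.1, fun s hs => ?_⟩
  by_contra! hst
  exact (ht.2 ((hiff s hst.le).1 hs)).not_gt hst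

lemma max'_mem_violations {A B : Finset α} (hA : A.Nonempty) (hBA : #B < #A) :
    A.max' hA ∈ violations B A := by
  have hcount : countLE A (A.max' hA) = #A := by
    rw [countLE, filter_true_of_mem fun x hx => le_max' A x hx]
  exact mem_filter.2 ⟨mem_univ _, (card_filter_le B _).trans_lt (hcount ▸ hBA)⟩

lemma card_swapBelow_of_isLeast {A B : Finset α} {t : α}
    (ht : IsLeast (violations A B : Set α) t) :
    #(swapBelow t A B) = #A + 1 ∧ #(swapBelow t B A) + 1 = #B := by
  have := countLE_eq_succ_of_isLeast ht
  have := card_swapBelow_add t A B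
  have := card_swapBelow_add t B A
  omega

def swapPair (t : α) (AB : Finset α × Finset α) : Finset α × Finset α :=
  (swapBelow t AB.1 AB.2, swapBelow t AB.2 AB.1)

/-- The swap keeps the least violation (of the reversed pair) in place, so the same swap is the
inverse map. -/
lemma sum_filter_not_dominates {R : Type*} [CommSemiring R] (w : α → R) {p q : ℕ}
    (hqp : q ≤ p) :
    ∑ AB ∈ (powersetCard p univ ×ˢ powersetCard (q + 1) univ).filter
        (fun AB => ¬Dominates AB.1 AB.2), (∏ x ∈ AB.1, w x) * ∏ x ∈ AB.2, w x =
      ∑ AB ∈ powersetCard (p + 1) univ ×ˢ powersetCard q univ,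
        (∏ x ∈ AB.1, w x) * ∏ x ∈ AB.2, w x := by
  have hviol : ∀ AB ∈ (powersetCard p (univ : Finset α) ×ˢ powersetCard (q + 1) univ).filter
      (fun AB => ¬Dominates AB.1 AB.2), (violations AB.1 AB.2).Nonempty :=
    fun AB h => violations_nonempty_iff.2 (mem_filter.1 h).2
  have hviol' : ∀ AB ∈ powersetCard (p + 1) (univ : Finset α) ×ˢ powersetCard q univ,
      (violations AB.2 AB.1).Nonempty := by
    intro AB h
    simp only [mem_product, mem_powersetCard_univ] at h
    have hA : AB.1.Nonempty := card_pos.1 (by omega)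
    exact ⟨_, max'_mem_violations hA (by omega)⟩
  refine sum_bij' (fun AB h => swapPair ((violations AB.1 AB.2).min' (hviol AB h)) AB)
    (fun AB h => swapPair ((violations AB.2 AB.1).min' (hviol' AB h)) AB) ?_ ?_ ?_ ?_ ?_
  · intro AB h
    have := card_swapBelow_of_isLeast (isLeast_min' _ (hviol AB h))
    simp only [mem_filter, mem_product, mem_powersetCard_univ] at h
    simp only [swapPair, mem_product, mem_powersetCard_univ]
    omega
  · intro AB h
    have ht := isLeast_min' _ (hviol' AB h)
    have := card_swapBelow_of_isLeast ht
    simp only [mem_product, mem_powersetCard_univ] at h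
    simp only [swapPair, mem_filter, mem_product, mem_powersetCard_univ,
      ← violations_nonempty_iff]
    exact ⟨by omega, _, (isLeast_violations_swapBelow ht).1⟩
  · intro AB h
    have ht := isLeast_violations_swapBelow (isLeast_min' _ (hviol AB h))
    simp only [swapPair] at ht ⊢
    rw [(isLeast_min' _ _).unique ht, swapBelow_swapBelow, swapBelow_swapBelow]
  · intro AB h
    have ht := isLeast_violations_swapBelow (isLeast_min' _ (hviol' AB h))
    simp only [swapPair] at ht ⊢
    rw [(isLeast_min' _ _).unique ht, swapBelow_swapBelow, swapBelow_swapBelow]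
  · intro AB h
    exact (prod_swapBelow_mul_prod_swapBelow w _ AB.1 AB.2).symm

end Swap

section Columns

variable {α : Type*} [LinearOrder α]

lemma strictMono_injOn_image_univ {p : ℕ} :
    Set.InjOn (fun f : Fin p → α => univ.image f) {f | StrictMono f} := by
  intro f hf g hg hfg
  rw [← StrictMono.range_inj hf hg, ← Set.image_univ, ← Set.image_univ, ← coe_univ, ← coe_image,
    ← coe_image]
  exact congrArg _ hfg

variable [Fintype α] {M : Type*} [AddCommMonoid M]

lemma finsum_mem_strictMono_pair_eq_sum (P : Finset α → Finset α → Prop) [DecidableRel P]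
    (F : Finset α → Finset α → M) (p q : ℕ) :
    ∑ᶠ T ∈ {T : (Fin p → α) × (Fin q → α) |
        StrictMono T.1 ∧ StrictMono T.2 ∧ P (univ.image T.1) (univ.image T.2)},
        F (univ.image T.1) (univ.image T.2) =
      ∑ AB ∈ (powersetCard p univ ×ˢ powersetCard q univ).filter (fun AB => P AB.1 AB.2),
        F AB.1 AB.2 := by
  classical
  rw [← coe_filter_univ, finsum_mem_coe_finset]
  refine sum_nbij (fun T => (univ.image T.1, univ.image T.2)) ?_ ?_ ?_ fun _ _ => rfl
  · intro T hT
    obtain ⟨h1, h2, hP⟩ := (mem_filter.1 hT).2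
    simp only [mem_filter, mem_product, mem_powersetCard_univ,
      card_image_of_injective _ h1.injective, card_image_of_injective _ h2.injective]
    exact ⟨by simp, hP⟩
  · intro T hT T' hT' h
    obtain ⟨h1, h2, -⟩ := (mem_filter.1 hT).2
    obtain ⟨h1', h2', -⟩ := (mem_filter.1 hT').2
    obtain ⟨e1, e2⟩ := Prod.ext_iff.1 h
    exact Prod.ext (strictMono_injOn_image_univ h1 h1' e1) (strictMono_injOn_image_univ h2 h2' e2)
  · intro AB hAB
    simp only [coe_filter, mem_product, mem_powersetCard_univ, Set.mem_ofPred_eq] at hAB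
    obtain ⟨⟨hA, hB⟩, hP⟩ := hAB
    refine ⟨(AB.1.orderEmbOfFin hA, AB.2.orderEmbOfFin hB), ?_, by simp⟩
    simpa using ⟨(AB.1.orderEmbOfFin hA).strictMono, (AB.2.orderEmbOfFin hB).strictMono, hP⟩

end Columns

section Esymm

variable {σ R : Type*} [Fintype σ]

lemma esymm_eq_zero_of_card_lt [CommSemiring R] {k : ℕ} (hk : Fintype.card σ < k) :
    esymm σ R k = 0 := by
  rw [esymm, powersetCard_eq_empty.2 (by simpa using hk), sum_empty]

lemma sum_product_powersetCard_prod_X_mul [CommSemiring R] (p q : ℕ) :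
    ∑ AB ∈ powersetCard p univ ×ˢ powersetCard q univ,
        (∏ i ∈ AB.1, (X i : MvPolynomial σ R)) * ∏ i ∈ AB.2, X i =
      esymm σ R p * esymm σ R q := by
  rw [sum_product, esymm, esymm, sum_mul_sum]

/-- Two-column Jacobi–Trudi identity. -/
lemma sum_filter_dominates_prod_X_mul [LinearOrder σ] [CommRing R] {p q : ℕ} (hqp : q ≤ p) :
    ∑ AB ∈ (powersetCard p univ ×ˢ powersetCard (q + 1) univ).filter
        (fun AB => Dominates AB.1 AB.2), (∏ i ∈ AB.1, (X i : MvPolynomial σ R)) * ∏ i ∈ AB.2, X i =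
      esymm σ R p * esymm σ R (q + 1) - esymm σ R (p + 1) * esymm σ R q := by
  rw [eq_sub_iff_add_eq, ← sum_product_powersetCard_prod_X_mul,
    ← sum_product_powersetCard_prod_X_mul,
    ← sum_filter_not_dominates _ hqp, sum_filter_add_sum_filter_not]

end Esymm

lemma isTab_zero_iff {n a c : ℕ} {T : (Fin (a + c) → Fin n) × (Fin (0 + c) → Fin n)} :
    IsTab n a 0 c T ↔
      StrictMono T.1 ∧ StrictMono T.2 ∧ Dominates (univ.image T.1) (univ.image T.2) := by
  rw [IsTab]
  refine and_congr_right fun h1 => and_congr_right fun h2 => ?_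
  rw [← forall_le_iff_dominates h1 h2 (by omega)]
  constructor
  · intro h j hq hp
    simpa only [Nat.zero_add] using h j (by omega) hp (by omega)
  · intro h j hc hp hq
    simpa only [Nat.zero_add] using h j (by omega) hp

lemma tabCh_zero_eq_sum (n a c : ℕ) :
    tabCh n a 0 c {T | IsTab n a 0 c T} =
      ∑ AB ∈ (powersetCard (a + c) univ ×ˢ powersetCard (0 + c) univ).filter
        (fun AB => Dominates AB.1 AB.2), (∏ i ∈ AB.1, X i) * ∏ i ∈ AB.2, X i := by
  refine (finsum_mem_congr (Set.ext fun _ => isTab_zero_iff) fun T hT => ?_).trans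
    (finsum_mem_strictMono_pair_eq_sum _ (fun A B => (∏ i ∈ A, X i) * ∏ i ∈ B, X i) _ _)
  rw [tabWt, prod_image fun i _ j _ h => hT.1.injective h,
    prod_image fun i _ j _ h => hT.2.1.injective h]

lemma eZ_natCast (n k : ℕ) : eZ n k = esymm (Fin n) ℤ k := by
  rw [eZ, if_pos (Int.natCast_nonneg k), Int.toNat_natCast]

lemma eZ_of_neg {n : ℕ} {j : ℤ} (hj : j < 0) : eZ n j = 0 :=
  if_neg (not_le.2 hj)

lemma eZ_of_lt {n : ℕ} {j : ℤ} (hj : n < j) : eZ n j = 0 := by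
  lift j to ℕ using by omega
  rw [eZ_natCast, esymm_eq_zero_of_card_lt (by simpa using hj)]

/-- Written as `g_a(c) - g_{a+2}(c-1)` with `g_r(i) = e_i e_{r+i}` the summands of `E_r`. -/
lemma tabCh_zero (n a c : ℕ) :
    tabCh n a 0 c {T | IsTab n a 0 c T} =
      eZ n c * eZ n (a + c) - eZ n (c - 1) * eZ n (a + 2 + (c - 1)) := by
  rw [tabCh_zero_eq_sum]
  cases c with
  | zero =>
    have hdom : ∀ AB ∈ powersetCard (a + 0) univ ×ˢ powersetCard (0 + 0) (univ : Finset (Fin n)),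
        Dominates AB.1 AB.2 := by
      intro AB hAB t
      simp only [mem_product, mem_powersetCard_univ] at hAB
      simp [countLE, card_eq_zero.1 hAB.2]
    rw [filter_true_of_mem hdom, sum_product_powersetCard_prod_X_mul, eZ_of_neg (j := (0 : ℕ) - 1)
      (by omega), zero_mul, sub_zero]
    simp only [← eZ_natCast]
    push_cast
    ring_nf
  | succ q =>
    rw [Nat.zero_add, sum_filter_dominates_prod_X_mul (by omega)]
    simp only [← eZ_natCast]
    push_cast
    ring_nf

theorem ch_c_infinity_general (n : ℕ) (a : ℕ) :
    (∑ᶠ c : ℕ, tabCh n a 0 c {T | IsTab n a 0 c T}) =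
      EZ n (a : ℤ) - EZ n ((a : ℤ) + 2) := by
  have hsupp : (Function.support fun c => tabCh n a 0 c {T | IsTab n a 0 c T}) ⊆
      range (n + 1) := by
    refine Function.support_subset_iff'.2 fun c hc => ?_
    simp only [coe_range, Set.mem_Iio, not_lt] at hc
    rw [tabCh_zero, eZ_of_lt (j := c) (by omega), eZ_of_lt (j := a + 2 + (c - 1)) (by omega)]
    ring
  rw [finsum_eq_sum_of_support_subset _ hsupp]
  simp only [tabCh_zero, sum_sub_distrib, EZ]
  rw [sub_right_inj, sum_range_succ' _ n, sum_range_succ (fun i : ℕ => eZ n i * eZ n (a + 2 + i)),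
    eZ_of_neg (j := (0 : ℕ) - 1) (by omega), eZ_of_lt (j := a + 2 + n) (by omega)]
  push_cast
  simp only [add_sub_cancel_right, zero_mul, mul_zero, add_zero]

/-- For every `a ≥ 0`, `Σ_{c≥0} ch SST_n(λ(a,0,c)) = E_a − E_{a+2}` in `ℤ[x_1,…,x_n]`.
(Since `b = 0`, every such tableau automatically has residue `0`, and the summands vanish for
`c > n`, so the sum is finite.) -/
theorem ch_c_infinity (n : ℕ) (hn : 1 ≤ n) (a : ℕ) :
    (∑ᶠ c : ℕ, tabCh n a 0 c {T | IsTab n a 0 c T}) =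
      EZ n (a : ℤ) - EZ n ((a : ℤ) + 2) :=
  ch_c_infinity_general n a
end

section
/- For every a ≥ 0, the sum over all b, c ≥ 0 of the weight generating functions of semistandard tableaux of shape λ(a,b,c) with entries in {1,…,n} and residue 𝔯_T = 0 equals E_a + E_{a+1} in ℤ[x_1,…,x_n]: Σ_{b,c≥0} ch { T ∈ SST_n(λ(a,b,c)) : 𝔯_T = 0 } = E_a + E_{a+1}. (All but finitely many summands vanish, since the shape admits no tableau with entries in {1,…,n} when b+c > n.) -/
open MvPolynomial

namespace ChBAux


open Finset

variable {n : ℕ}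

/-- number of elements of `A` that are `≥ t`. -/
def cnt (A : Finset (Fin n)) (t : ℕ) : ℕ := #(A.filter fun x : Fin n => t ≤ (x : ℕ))

lemma cnt_le_card (A : Finset (Fin n)) (t : ℕ) : cnt A t ≤ A.card :=
  Finset.card_le_card (Finset.filter_subset _ _)

lemma cnt_zero (A : Finset (Fin n)) : cnt A 0 = A.card := by
  simp [cnt]

lemma cnt_eq_zero (A : Finset (Fin n)) {t : ℕ} (h : n ≤ t) : cnt A t = 0 := by
  rw [cnt, Finset.card_eq_zero]
  ext x
  simp only [mem_filter, notMem_empty, iff_false, not_and]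
  intro _
  have := x.isLt
  omega

lemma cnt_anti (A : Finset (Fin n)) {s t : ℕ} (h : s ≤ t) : cnt A t ≤ cnt A s := by
  apply Finset.card_le_card
  intro x hx
  simp only [mem_filter] at hx ⊢
  exact ⟨hx.1, by omega⟩

lemma cnt_step (A : Finset (Fin n)) (t : ℕ) : cnt A t ≤ cnt A (t + 1) + 1 := by
  by_cases hn : n ≤ t
  · rw [cnt_eq_zero A hn]; omega
  push_neg at hn
  have hsub : A.filter (fun x : Fin n => t ≤ (x : ℕ)) ⊆
      insert ⟨t, hn⟩ (A.filter fun x : Fin n => t + 1 ≤ (x : ℕ)) := by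
    intro x hx
    simp only [mem_filter] at hx
    rcases eq_or_lt_of_le hx.2 with h | h
    · exact Finset.mem_insert.2 (Or.inl (by apply Fin.ext; simp [← h]))
    · exact Finset.mem_insert.2 (Or.inr (by simp [mem_filter, hx.1]; omega))
  calc #(A.filter fun x : Fin n => t ≤ (x : ℕ)) ≤ _ := Finset.card_le_card hsub
    _ ≤ _ := Finset.card_insert_le _ _

lemma card_image_strictMono {p : ℕ} {f : Fin p → Fin n} (hf : StrictMono f) :
    (image f univ).card = p := by
  rw [Finset.card_image_of_injective _ hf.injective, card_univ, Fintype.card_fin]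

lemma key_iff {q : ℕ} {r : Fin q → Fin n} (hr : StrictMono r) (i : Fin q) (t : ℕ) :
    t ≤ (r i : ℕ) ↔ q - (i : ℕ) ≤ cnt (image r univ) t := by
  classical
  have himg : (image r univ).filter (fun x : Fin n => t ≤ (x : ℕ))
      = image r (univ.filter fun j => t ≤ ((r j : ℕ))) := by
    ext x
    simp only [mem_filter, mem_image, mem_univ, true_and]
    constructor
    · rintro ⟨⟨j, rfl⟩, hx⟩; exact ⟨j, hx, rfl⟩
    · rintro ⟨j, hj, rfl⟩; exact ⟨⟨j, rfl⟩, hj⟩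
  have hcnt : cnt (image r univ) t = #(univ.filter fun j => t ≤ ((r j : ℕ))) := by
    rw [cnt, himg, Finset.card_image_of_injective _ hr.injective]
  rw [hcnt]
  constructor
  · intro ht
    have hsub : Finset.Ici i ⊆ univ.filter fun j => t ≤ ((r j : ℕ)) := by
      intro j hj
      simp only [Finset.mem_Ici] at hj
      simp only [mem_filter, mem_univ, true_and]
      exact le_trans ht (hr.monotone hj)
    have := Finset.card_le_card hsub
    rwa [Fin.card_Ici] at this
  · intro hc
    by_contra hnot
    push_neg at hnot
    have hsub : (univ.filter fun j => t ≤ ((r j : ℕ))) ⊆ Finset.Ioi i := by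
      intro j hj
      simp only [mem_filter, mem_univ, true_and] at hj
      simp only [Finset.mem_Ioi]
      by_contra hji
      push_neg at hji
      have : (r j : ℕ) ≤ (r i : ℕ) := hr.monotone hji
      omega
    have := Finset.card_le_card hsub
    rw [Fin.card_Ioi] at this
    have := i.isLt
    omega

/-- abstract two-column tableau condition -/
def Cond {p q : ℕ} (c : ℕ) (l : Fin p → Fin n) (r : Fin q → Fin n) : Prop :=
  ∀ (i : Fin p) (k : Fin q), (i : ℕ) < c → (k : ℕ) + c = q + (i : ℕ) → l i ≤ r k

lemma cond_iff {p q d c : ℕ} {l : Fin p → Fin n} {r : Fin q → Fin n}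
    (hl : StrictMono l) (hr : StrictMono r) (hp : p = d + c) (hcq : c ≤ q) :
    Cond c l r ↔ ∀ t, cnt (image l univ) t ≤ d + cnt (image r univ) t := by
  constructor
  · intro hc t
    set α := cnt (image l univ) t with hα
    by_cases hda : α ≤ d
    · omega
    push_neg at hda
    have hαp : α ≤ p := by
      calc α ≤ (image l univ).card := cnt_le_card _ _
        _ = p := card_image_strictMono hl
    have h2 : p - α < p := by omega
    have hkv : q + (p - α) - c < q := by omega
    have hkeq : (q + (p - α) - c) + c = q + (p - α) := by omega
    have hti : t ≤ (l ⟨p - α, h2⟩ : ℕ) := by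
      rw [key_iff hl]
      simp only
      omega
    have hik := hc ⟨p - α, h2⟩ ⟨q + (p - α) - c, hkv⟩ (by simp; omega) (by simpa using hkeq)
    have htr : t ≤ (r ⟨q + (p - α) - c, hkv⟩ : ℕ) := le_trans hti hik
    rw [key_iff hr] at htr
    simp only at htr
    omega
  · intro h i k hic hk
    have h1 : p - (i : ℕ) ≤ cnt (image l univ) ((l i : ℕ)) := by
      rw [← key_iff hl]
    have h2 := h ((l i : ℕ))
    have hgoal : q - (k : ℕ) ≤ cnt (image r univ) ((l i : ℕ)) := by
      have := i.isLt
      omega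
    rw [← key_iff hr] at hgoal
    exact hgoal



lemma isTab_iff {a b c : ℕ} {T : (Fin (a + c) → Fin n) × (Fin (b + c) → Fin n)} :
    IsTab n a b c T ↔ StrictMono T.1 ∧ StrictMono T.2 ∧ Cond c T.1 T.2 := by
  refine and_congr_right fun h1 => and_congr_right fun h2 => ?_
  constructor
  · intro horig i k hic hk
    have hkv : (k : ℕ) = b + (i : ℕ) := by omega
    have h3 : b + (i : ℕ) < b + c := by have := k.isLt; omega
    have H := horig (i : ℕ) hic i.isLt h3
    have e1 : (⟨(i : ℕ), i.isLt⟩ : Fin (a + c)) = i := rfl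
    have e2 : (⟨b + (i : ℕ), h3⟩ : Fin (b + c)) = k := Fin.ext hkv.symm
    rwa [e1, e2] at H
  · intro hc j hj h2 h3
    exact hc ⟨j, h2⟩ ⟨b + j, h3⟩ hj (by simp; omega)

lemma slides_iff {a b c k : ℕ} {T : (Fin (a + c) → Fin n) × (Fin (b + c) → Fin n)} :
    Slides n a b c T k ↔ k ≤ a ∧ k ≤ b ∧ Cond (c + k) T.1 T.2 := by
  refine and_congr_right fun ha => and_congr_right fun hb => ?_
  constructor
  · intro horig i k' hic hk'
    have hkv : (k' : ℕ) = b + (i : ℕ) - k := by omega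
    have h3 : b + (i : ℕ) - k < b + c := by have := k'.isLt; omega
    have H := horig (i : ℕ) hic i.isLt h3
    have e1 : (⟨(i : ℕ), i.isLt⟩ : Fin (a + c)) = i := rfl
    have e2 : (⟨b + (i : ℕ) - k, h3⟩ : Fin (b + c)) = k' := Fin.ext hkv.symm
    rwa [e1, e2] at H
  · intro hc j hj h2 h3
    exact hc ⟨j, h2⟩ ⟨b + j - k, h3⟩ hj (by simp; omega)

lemma slides_mono {a b c k j : ℕ} {T : (Fin (a + c) → Fin n) × (Fin (b + c) → Fin n)}
    (hr : StrictMono T.2) (hjk : j ≤ k) (h : Slides n a b c T k) : Slides n a b c T j := by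
  obtain ⟨hka, hkb, hcond⟩ := h
  refine ⟨le_trans hjk hka, le_trans hjk hkb, ?_⟩
  intro j' hj' h2 h3
  have h3' : b + j' - k < b + c := by omega
  have H := hcond j' (by omega) h2 h3'
  refine le_trans H (hr.monotone ?_)
  simp only [Fin.mk_le_mk]
  omega

lemma residue_zero_iff {a b c : ℕ} {T : (Fin (a + c) → Fin n) × (Fin (b + c) → Fin n)}
    (hT : IsTab n a b c T) : tabResidue n a b c T = 0 ↔ ¬ Slides n a b c T 1 := by
  have h0 : Slides n a b c T 0 := ⟨Nat.zero_le _, Nat.zero_le _, hT.2.2⟩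
  have hbdd : BddAbove {k | Slides n a b c T k} := ⟨a, fun k hk => hk.1⟩
  constructor
  · intro hres hs1
    have h1 : (1 : ℕ) ≤ tabResidue n a b c T := le_csSup hbdd hs1
    omega
  · intro hns1
    have hset : {k | Slides n a b c T k} = {0} := by
      apply Set.eq_singleton_iff_unique_mem.2
      refine ⟨h0, fun k hk => ?_⟩
      by_contra hk0
      exact hns1 (slides_mono hT.2.1 (by omega) hk)
    rw [tabResidue, hset]
    exact csSup_singleton 0

/-- pair version of the counting function -/
def fI (AB : Finset (Fin n) × Finset (Fin n)) (t : ℕ) : ℤ :=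
  (cnt AB.1 t : ℤ) - (cnt AB.2 t : ℤ)

def Hit (n : ℕ) (v : ℤ) (AB : Finset (Fin n) × Finset (Fin n)) : Prop :=
  ∃ t ≤ n, v ≤ fI AB t

def CondA (n : ℕ) (v : ℤ) (AB : Finset (Fin n) × Finset (Fin n)) : Prop :=
  Hit n v AB ∧ ¬ Hit n (v + 1) AB

lemma fI_last (AB : Finset (Fin n) × Finset (Fin n)) {t : ℕ} (h : n ≤ t) : fI AB t = 0 := by
  simp [fI, cnt_eq_zero _ h]

lemma not_hit_iff {v : ℤ} {AB : Finset (Fin n) × Finset (Fin n)} :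
    ¬ Hit n (v + 1) AB ↔ ∀ t, fI AB t ≤ v := by
  rw [Hit]
  push_neg
  constructor
  · intro h t
    by_cases ht : t ≤ n
    · have := h t ht; omega
    · rw [fI_last AB (by omega)]
      have := h n le_rfl
      rw [fI_last AB le_rfl] at this
      omega
  · intro h t _
    have := h t
    omega

lemma tab_res_iff {a b c : ℕ} {T : (Fin (a + c) → Fin n) × (Fin (b + c) → Fin n)}
    (h1 : StrictMono T.1) (h2 : StrictMono T.2) :
    (IsTab n a b c T ∧ tabResidue n a b c T = 0)
      ↔ CondA n (a : ℤ) (image T.1 univ, image T.2 univ) := by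
  set A := image T.1 univ with hA
  set B := image T.2 univ with hB
  have hcA : A.card = a + c := card_image_strictMono h1
  have hcB : B.card = b + c := card_image_strictMono h2
  have hfI : ∀ t, fI (A, B) t = (cnt A t : ℤ) - cnt B t := fun t => rfl
  have htab : IsTab n a b c T ↔ ∀ t, cnt A t ≤ a + cnt B t := by
    rw [isTab_iff]
    simp only [h1, h2, true_and]
    exact cond_iff h1 h2 rfl (by omega)
  have hnh : (¬ Hit n ((a : ℤ) + 1) (A, B)) ↔ ∀ t, cnt A t ≤ a + cnt B t := by
    rw [not_hit_iff]
    constructor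
    · intro h t; have := h t; rw [hfI] at this; omega
    · intro h t; rw [hfI]; have := h t; omega
  constructor
  · rintro ⟨htabh, hres⟩
    refine ⟨?_, hnh.2 (htab.1 htabh)⟩
    rcases Nat.eq_zero_or_pos a with ha | ha
    · exact ⟨n, le_rfl, by rw [fI_last _ le_rfl]; omega⟩
    rcases Nat.eq_zero_or_pos b with hb | hb
    · refine ⟨0, Nat.zero_le _, ?_⟩
      rw [hfI, cnt_zero, cnt_zero, hcA, hcB, hb]
      push_cast
      omega
    · have hns1 := (residue_zero_iff htabh).1 hres
      rw [slides_iff] at hns1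
      push_neg at hns1
      have hnc := hns1 ha hb
      rw [cond_iff h1 h2 (show a + c = (a - 1) + (c + 1) by omega) (by omega)] at hnc
      push_neg at hnc
      obtain ⟨t, ht⟩ := hnc
      simp only [← hA, ← hB] at ht
      have htn : t ≤ n := by
        by_contra htn
        rw [cnt_eq_zero A (by omega), cnt_eq_zero B (by omega)] at ht
        omega
      exact ⟨t, htn, by rw [hfI]; omega⟩
  · rintro ⟨hhit, hnhit⟩
    have htabh : IsTab n a b c T := htab.2 (hnh.1 hnhit)
    refine ⟨htabh, (residue_zero_iff htabh).2 ?_⟩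
    rw [slides_iff]
    push_neg
    intro ha hb
    rw [cond_iff h1 h2 (show a + c = (a - 1) + (c + 1) by omega) (by omega)]
    push_neg
    obtain ⟨t, htn, ht⟩ := hhit
    rw [hfI] at ht
    refine ⟨t, ?_⟩
    simp only [← hA, ← hB]
    omega



noncomputable def w (AB : Finset (Fin n) × Finset (Fin n)) : MvPolynomial (Fin n) ℤ :=
  (∏ x ∈ AB.1, X x) * (∏ x ∈ AB.2, X x)

open Classical in
noncomputable def pf (n : ℕ) (P : Finset (Fin n) × Finset (Fin n) → Prop) :
    Finset (Finset (Fin n) × Finset (Fin n)) := Finset.univ.filter P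

lemma mem_pf {P : Finset (Fin n) × Finset (Fin n) → Prop}
    {AB : Finset (Fin n) × Finset (Fin n)} : AB ∈ pf n P ↔ P AB := by
  classical
  simp [pf]

lemma image_orderEmbOfFin {s : Finset (Fin n)} {k : ℕ} (h : s.card = k) :
    image (fun x => s.orderEmbOfFin h x) univ = s := by
  apply Finset.coe_injective
  rw [coe_image, coe_univ, Set.image_univ]
  exact s.range_orderEmbOfFin h

lemma tabCh_eq (a b c : ℕ) :
    tabCh n a b c {T | IsTab n a b c T ∧ tabResidue n a b c T = 0}
      = ∑ AB ∈ pf n (fun AB => CondA n (a : ℤ) AB ∧ AB.1.card = a + c ∧ AB.2.card = b + c),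
          w AB := by
  classical
  rw [tabCh, finsum_mem_eq_finite_toFinset_sum _ (Set.toFinite _)]
  refine Finset.sum_bij' (i := fun T _ => ((image T.1 univ : Finset (Fin n)), image T.2 univ))
    (j := fun AB hAB =>
      ((fun x => AB.1.orderEmbOfFin (mem_pf.1 hAB).2.1 x),
       (fun x => AB.2.orderEmbOfFin (mem_pf.1 hAB).2.2 x)))
    ?_ ?_ ?_ ?_ ?_
  · intro T hT
    rw [Set.Finite.mem_toFinset] at hT
    obtain ⟨htab, hres⟩ := hT
    have h1 := htab.1
    have h2 := htab.2.1
    rw [mem_pf]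
    exact ⟨(tab_res_iff h1 h2).1 ⟨htab, hres⟩, card_image_strictMono h1,
      card_image_strictMono h2⟩
  · intro AB hAB
    rw [Set.Finite.mem_toFinset]
    have hc := (mem_pf.1 hAB).1
    have h1 : StrictMono fun x => AB.1.orderEmbOfFin (mem_pf.1 hAB).2.1 x :=
      (AB.1.orderEmbOfFin _).strictMono
    have h2 : StrictMono fun x => AB.2.orderEmbOfFin (mem_pf.1 hAB).2.2 x :=
      (AB.2.orderEmbOfFin _).strictMono
    refine (tab_res_iff (T := (_, _)) h1 h2).2 ?_
    simpa [image_orderEmbOfFin] using hc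
  · intro T hT
    rw [Set.Finite.mem_toFinset] at hT
    have h1 := hT.1.1
    have h2 := hT.1.2.1
    refine Prod.ext ?_ ?_
    · exact (Finset.orderEmbOfFin_unique (card_image_strictMono h1)
        (fun x => mem_image_of_mem _ (mem_univ x)) h1).symm
    · exact (Finset.orderEmbOfFin_unique (card_image_strictMono h2)
        (fun x => mem_image_of_mem _ (mem_univ x)) h2).symm
  · intro AB hAB
    refine Prod.ext ?_ ?_ <;> simp [image_orderEmbOfFin]
  · intro T hT
    rw [Set.Finite.mem_toFinset] at hT
    have h1 := hT.1.1
    have h2 := hT.1.2.1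
    rw [tabWt, w]
    congr 1
    · exact (Finset.prod_image fun x _ y _ h => h1.injective h).symm
    · exact (Finset.prod_image fun x _ y _ h => h2.injective h).symm

lemma tabCh_zero {a b c : ℕ} (h : n < b + c) :
    tabCh n a b c {T | IsTab n a b c T ∧ tabResidue n a b c T = 0} = 0 := by
  have hempty : {T : (Fin (a + c) → Fin n) × (Fin (b + c) → Fin n) |
      IsTab n a b c T ∧ tabResidue n a b c T = 0} = ∅ := by
    ext T
    simp only [Set.mem_setOf_eq, Set.mem_empty_iff_false, iff_false, not_and]
    intro htab
    exfalso
    have := Fintype.card_le_of_injective _ htab.2.1.injective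
    simp [Fintype.card_fin] at this
    omega
  rw [tabCh, hempty, finsum_mem_empty]

lemma lhs_eq (a : ℕ) :
    (∑ᶠ (b : ℕ) (c : ℕ),
        tabCh n a b c {T | IsTab n a b c T ∧ tabResidue n a b c T = 0})
      = ∑ AB ∈ pf n (CondA n (a : ℤ)), w AB := by
  classical
  have hinner : ∀ b : ℕ,
      (∑ᶠ c : ℕ, tabCh n a b c {T | IsTab n a b c T ∧ tabResidue n a b c T = 0})
        = ∑ c ∈ Finset.range (n + 1),
            tabCh n a b c {T | IsTab n a b c T ∧ tabResidue n a b c T = 0} := by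
    intro b
    apply finsum_eq_sum_of_support_subset
    intro c hc
    simp only [Function.mem_support] at hc
    simp only [Finset.coe_range, Set.mem_Iio]
    by_contra hcn
    exact hc (tabCh_zero (by omega))
  rw [finsum_congr hinner]
  rw [finsum_eq_sum_of_support_subset _ (s := Finset.range (n + 1)) ?side]
  case side =>
    intro b hb
    simp only [Function.mem_support] at hb
    simp only [Finset.coe_range, Set.mem_Iio]
    by_contra hbn
    apply hb
    apply Finset.sum_eq_zero
    intro c _
    exact tabCh_zero (by omega)
  -- now a double Finset sum
  have hfib := Finset.sum_fiberwise_of_maps_to (g := fun AB : Finset (Fin n) × Finset (Fin n) =>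
      ((AB.2.card - (AB.1.card - a), AB.1.card - a) : ℕ × ℕ))
    (s := pf n (CondA n (a : ℤ))) (t := Finset.range (n + 1) ×ˢ Finset.range (n + 1))
    ?mapsto w
  case mapsto =>
    intro AB _
    have hA := Finset.card_le_univ AB.1
    have hB := Finset.card_le_univ AB.2
    simp only [card_univ, Fintype.card_fin] at hA hB
    simp only [Finset.mem_product, Finset.mem_range]
    omega
  rw [← hfib, Finset.sum_product]
  apply Finset.sum_congr rfl
  intro b hb
  apply Finset.sum_congr rfl
  intro c hc
  rw [tabCh_eq]
  apply Finset.sum_congr ?_ (fun _ _ => rfl)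
  ext AB
  simp only [Finset.mem_filter, mem_pf, Prod.mk.injEq]
  constructor
  · rintro ⟨hcond, hA, hB⟩
    refine ⟨hcond, ?_, ?_⟩ <;> omega
  · rintro ⟨hcond, hbc, hcc⟩
    have hfacts : a ≤ AB.1.card ∧ AB.1.card ≤ a + AB.2.card := by
      obtain ⟨⟨t, htn, ht⟩, hnh⟩ := hcond
      have h1 : (a : ℤ) ≤ (cnt AB.1 t : ℤ) - cnt AB.2 t := ht
      have h2 : cnt AB.1 t ≤ AB.1.card := cnt_le_card _ _
      have h3 := not_hit_iff.1 hnh 0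
      rw [show fI AB 0 = (cnt AB.1 0 : ℤ) - cnt AB.2 0 from rfl, cnt_zero, cnt_zero] at h3
      omega
    exact ⟨hcond, by omega, by omega⟩
lemma fI_step (AB : Finset (Fin n) × Finset (Fin n)) (t : ℕ) :
    fI AB t ≤ fI AB (t + 1) + 1 := by
  have h1 := cnt_step AB.1 t
  have h2 := cnt_anti AB.2 (show t ≤ t + 1 by omega)
  rw [fI, fI]
  omega

/-- the last time the walk hits level `v` -/
noncomputable def ts (n : ℕ) (v : ℤ) (AB : Finset (Fin n) × Finset (Fin n)) : ℕ :=
  Nat.findGreatest (fun t => v ≤ fI AB t) n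

lemma ts_le (v : ℤ) (AB : Finset (Fin n) × Finset (Fin n)) : ts n v AB ≤ n :=
  Nat.findGreatest_le n

lemma ts_greatest {v : ℤ} {AB : Finset (Fin n) × Finset (Fin n)} {t : ℕ}
    (h1 : ts n v AB < t) (h2 : t ≤ n) : ¬ v ≤ fI AB t := by
  classical
  exact Nat.findGreatest_is_greatest (P := fun t => v ≤ fI AB t) h1 h2

lemma ts_spec {v : ℤ} {AB : Finset (Fin n) × Finset (Fin n)} (hv : 0 ≤ v) (h : Hit n v AB) :
    fI AB (ts n v AB) = v := by
  classical
  obtain ⟨t, htn, ht⟩ := h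
  have hle : v ≤ fI AB (ts n v AB) :=
    Nat.findGreatest_spec (P := fun t => v ≤ fI AB t) htn ht
  rcases eq_or_lt_of_le (ts_le v AB (n := n)) with heq | hlt
  · rw [heq] at hle ⊢
    rw [fI_last AB le_rfl] at hle ⊢
    omega
  · have hgt : ¬ v ≤ fI AB (ts n v AB + 1) := ts_greatest (by omega) (by omega)
    have := fI_step AB (ts n v AB)
    omega

/-- reflection: swap the two columns strictly below position `s` -/
def rswap (s : ℕ) (AB : Finset (Fin n) × Finset (Fin n)) : Finset (Fin n) × Finset (Fin n) :=
  (AB.1.filter (fun x : Fin n => s ≤ (x : ℕ)) ∪ AB.2.filter (fun x : Fin n => ¬ s ≤ (x : ℕ)),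
   AB.2.filter (fun x : Fin n => s ≤ (x : ℕ)) ∪ AB.1.filter (fun x : Fin n => ¬ s ≤ (x : ℕ)))

lemma cnt_union_of_disjoint {A B : Finset (Fin n)} (h : Disjoint A B) (t : ℕ) :
    cnt (A ∪ B) t = cnt A t + cnt B t := by
  rw [cnt, cnt, cnt, Finset.filter_union]
  exact Finset.card_union_of_disjoint (Finset.disjoint_filter_filter h)

lemma disjoint_ge_lt (A B : Finset (Fin n)) (s : ℕ) :
    Disjoint (A.filter (fun x : Fin n => s ≤ (x : ℕ)))
      (B.filter (fun x : Fin n => ¬ s ≤ (x : ℕ))) := by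
  rw [Finset.disjoint_left]
  intro x hx hx'
  simp only [Finset.mem_filter] at hx hx'
  exact hx'.2 hx.2

lemma cnt_filter_ge {A : Finset (Fin n)} {s t : ℕ} (h : s ≤ t) :
    cnt (A.filter (fun x : Fin n => s ≤ (x : ℕ))) t = cnt A t := by
  classical
  rw [cnt, cnt, Finset.filter_filter]
  congr 1
  apply Finset.filter_congr
  intro x _
  constructor
  · exact And.right
  · intro hx; exact ⟨by omega, hx⟩

lemma cnt_filter_lt_ge {A : Finset (Fin n)} {s t : ℕ} (h : s ≤ t) :
    cnt (A.filter (fun x : Fin n => ¬ s ≤ (x : ℕ))) t = 0 := by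
  rw [cnt, Finset.card_eq_zero, Finset.filter_filter, Finset.filter_eq_empty_iff]
  intro x _
  omega

lemma cnt_filter_ge_low {A : Finset (Fin n)} {s t : ℕ} (h : t ≤ s) :
    cnt (A.filter (fun x : Fin n => s ≤ (x : ℕ))) t = cnt A s := by
  classical
  rw [cnt, cnt, Finset.filter_filter]
  congr 1
  apply Finset.filter_congr
  intro x _
  constructor
  · intro hx; exact hx.1
  · intro hx; exact ⟨hx, by omega⟩

lemma cnt_filter_lt_low {A : Finset (Fin n)} {s t : ℕ} (h : t ≤ s) :
    cnt (A.filter (fun x : Fin n => ¬ s ≤ (x : ℕ))) t + cnt A s = cnt A t := by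
  classical
  have key := Finset.card_filter_add_card_filter_not
      (s := A.filter (fun x : Fin n => t ≤ (x : ℕ))) (p := fun x : Fin n => s ≤ (x : ℕ))
  rw [Finset.filter_filter, Finset.filter_filter] at key
  have e1 : A.filter (fun x : Fin n => t ≤ (x : ℕ) ∧ s ≤ (x : ℕ))
      = A.filter (fun x : Fin n => s ≤ (x : ℕ)) := by
    apply Finset.filter_congr
    intro x _
    constructor
    · exact And.right
    · intro hx; exact ⟨by omega, hx⟩
  have e2 : A.filter (fun x : Fin n => t ≤ (x : ℕ) ∧ ¬ s ≤ (x : ℕ))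
      = (A.filter (fun x : Fin n => ¬ s ≤ (x : ℕ))).filter (fun x : Fin n => t ≤ (x : ℕ)) := by
    rw [Finset.filter_filter]
    apply Finset.filter_congr
    intro x _
    constructor
    · intro hx; exact ⟨hx.2, hx.1⟩
    · intro hx; exact ⟨hx.2, hx.1⟩
  rw [e1, e2] at key
  rw [cnt, cnt, cnt]
  omega

lemma fI_swap_ge {AB : Finset (Fin n) × Finset (Fin n)} {s t : ℕ} (h : s ≤ t) :
    fI (rswap s AB) t = fI AB t := by
  simp only [fI, rswap]
  rw [cnt_union_of_disjoint (disjoint_ge_lt _ _ _), cnt_union_of_disjoint (disjoint_ge_lt _ _ _),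
    cnt_filter_ge h, cnt_filter_ge h, cnt_filter_lt_ge h, cnt_filter_lt_ge h]
  omega

lemma fI_swap_le {AB : Finset (Fin n) × Finset (Fin n)} {s t : ℕ} (h : t ≤ s) :
    fI (rswap s AB) t = 2 * fI AB s - fI AB t := by
  simp only [fI, rswap]
  rw [cnt_union_of_disjoint (disjoint_ge_lt _ _ _), cnt_union_of_disjoint (disjoint_ge_lt _ _ _),
    cnt_filter_ge_low h, cnt_filter_ge_low h]
  have h1 := cnt_filter_lt_low (A := AB.1) (s := s) (t := t) h
  have h2 := cnt_filter_lt_low (A := AB.2) (s := s) (t := t) h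
  omega

lemma ts_rswap {v : ℤ} {AB : Finset (Fin n) × Finset (Fin n)} (hv : 0 ≤ v) (h : Hit n v AB) :
    ts n v (rswap (ts n v AB) AB) = ts n v AB := by
  classical
  set s := ts n v AB with hs
  have hP : v ≤ fI (rswap s AB) s := by
    rw [fI_swap_ge le_rfl, hs, ts_spec hv h]
  apply le_antisymm
  · by_contra hlt
    push_neg at hlt
    have h2 : v ≤ fI (rswap s AB) (ts n v (rswap s AB)) :=
      Nat.findGreatest_spec (P := fun t => v ≤ fI (rswap s AB) t) (ts_le v AB) hP
    have h3 : ts n v (rswap s AB) ≤ n := Nat.findGreatest_le n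
    rw [fI_swap_ge (by omega)] at h2
    exact ts_greatest (by omega) h3 h2
  · exact Nat.le_findGreatest (ts_le v AB) hP

lemma rswap_invol {s : ℕ} {AB : Finset (Fin n) × Finset (Fin n)} :
    rswap s (rswap s AB) = AB := by
  simp only [rswap]
  refine Prod.ext ?_ ?_ <;>
  · simp only
    ext x
    simp only [Finset.mem_union, Finset.mem_filter]
    by_cases hx : s ≤ (x : ℕ) <;> simp [hx]

lemma w_rswap {s : ℕ} {AB : Finset (Fin n) × Finset (Fin n)} : w (rswap s AB) = w AB := by
  classical
  simp only [w, rswap]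
  rw [Finset.prod_union (disjoint_ge_lt _ _ _), Finset.prod_union (disjoint_ge_lt _ _ _),
    ← Finset.prod_filter_mul_prod_filter_not AB.1 (fun x : Fin n => s ≤ (x : ℕ)) (fun x => X x),
    ← Finset.prod_filter_mul_prod_filter_not AB.2 (fun x : Fin n => s ≤ (x : ℕ)) (fun x => X x)]
  ring

lemma hit_of_f0 {v : ℤ} {AB : Finset (Fin n) × Finset (Fin n)} (h : v ≤ fI AB 0) :
    Hit n v AB := ⟨0, Nat.zero_le _, h⟩

lemma sum_hit (v : ℤ) (hv : 0 ≤ v) :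
    ∑ AB ∈ pf n (Hit n v), w AB
      = (∑ AB ∈ pf n (fun AB => v ≤ fI AB 0), w AB)
        + ∑ AB ∈ pf n (fun AB => v + 1 ≤ fI AB 0), w AB := by
  classical
  rw [← Finset.sum_filter_add_sum_filter_not (pf n (Hit n v)) (fun AB => v ≤ fI AB 0) w]
  congr 1
  · apply Finset.sum_congr ?_ (fun _ _ => rfl)
    ext AB
    simp only [Finset.mem_filter, mem_pf]
    exact ⟨fun h => h.2, fun h => ⟨hit_of_f0 h, h⟩⟩
  · refine Finset.sum_bij' (i := fun AB _ => rswap (ts n v AB) AB)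
      (j := fun AB _ => rswap (ts n v AB) AB) ?_ ?_ ?_ ?_ ?_
    · intro AB hAB
      simp only [Finset.mem_filter, mem_pf] at hAB
      obtain ⟨hhit, hf0⟩ := hAB
      rw [mem_pf]
      have hval := fI_swap_le (AB := AB) (s := ts n v AB) (Nat.zero_le _)
      rw [ts_spec hv hhit] at hval
      rw [hval]
      push_neg at hf0
      omega
    · intro AB hAB
      rw [mem_pf] at hAB
      have hhit : Hit n v AB := hit_of_f0 (by omega)
      simp only [Finset.mem_filter, mem_pf]
      have hval := fI_swap_le (AB := AB) (s := ts n v AB) (Nat.zero_le _)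
      rw [ts_spec hv hhit] at hval
      refine ⟨⟨ts n v AB, ts_le v AB, ?_⟩, ?_⟩
      · rw [fI_swap_ge le_rfl, ts_spec hv hhit]
      · rw [hval]
        push_neg
        omega
    · intro AB hAB
      simp only [Finset.mem_filter, mem_pf] at hAB
      rw [ts_rswap hv hAB.1, rswap_invol]
    · intro AB hAB
      rw [mem_pf] at hAB
      have hhit : Hit n v AB := hit_of_f0 (by omega)
      rw [ts_rswap hv hhit, rswap_invol]
    · intro AB _
      exact w_rswap.symm

lemma sum_condA (v : ℤ) :
    ∑ AB ∈ pf n (CondA n v), w AB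
      = (∑ AB ∈ pf n (Hit n v), w AB) - ∑ AB ∈ pf n (Hit n (v + 1)), w AB := by
  classical
  rw [← Finset.sum_filter_add_sum_filter_not (pf n (Hit n v)) (fun AB => Hit n (v + 1) AB) w]
  have e1 : (pf n (Hit n v)).filter (fun AB => Hit n (v + 1) AB) = pf n (Hit n (v + 1)) := by
    ext AB
    simp only [Finset.mem_filter, mem_pf]
    refine ⟨fun h => h.2, fun h => ⟨?_, h⟩⟩
    obtain ⟨t, htn, ht⟩ := h
    exact ⟨t, htn, by omega⟩
  have e2 : (pf n (Hit n v)).filter (fun AB => ¬ Hit n (v + 1) AB) = pf n (CondA n v) := by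
    ext AB
    simp only [Finset.mem_filter, mem_pf, CondA]
  rw [e1, e2]
  ring

lemma sum_ge_split (v : ℤ) :
    ∑ AB ∈ pf n (fun AB => v ≤ fI AB 0), w AB
      = (∑ AB ∈ pf n (fun AB => fI AB 0 = v), w AB)
        + ∑ AB ∈ pf n (fun AB => v + 1 ≤ fI AB 0), w AB := by
  classical
  rw [← Finset.sum_filter_add_sum_filter_not (pf n (fun AB => v ≤ fI AB 0))
      (fun AB => fI AB 0 = v) w]
  congr 1
  · apply Finset.sum_congr ?_ (fun _ _ => rfl)
    ext AB
    simp only [Finset.mem_filter, mem_pf]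
    constructor
    · exact fun h => h.2
    · intro h; exact ⟨by omega, h⟩
  · apply Finset.sum_congr ?_ (fun _ _ => rfl)
    ext AB
    simp only [Finset.mem_filter, mem_pf]
    omega

lemma eZ_natCast (m : ℕ) : eZ n (m : ℤ) = esymm (Fin n) ℤ m := by
  rw [eZ, if_pos (Int.natCast_nonneg m), Int.toNat_natCast]

lemma sum_eq_EZ (r : ℕ) :
    ∑ AB ∈ pf n (fun AB => fI AB 0 = (r : ℤ)), w AB = EZ n (r : ℤ) := by
  classical
  have hset : pf n (fun AB => fI AB 0 = (r : ℤ))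
      = pf n (fun AB : Finset (Fin n) × Finset (Fin n) => AB.1.card = AB.2.card + r) := by
    ext AB
    rw [mem_pf, mem_pf]
    have : fI AB 0 = (AB.1.card : ℤ) - AB.2.card := by
      rw [show fI AB 0 = ((cnt AB.1 0 : ℤ) - cnt AB.2 0) from rfl, cnt_zero, cnt_zero]
    rw [this]
    omega
  rw [hset]
  have hfib := Finset.sum_fiberwise_of_maps_to
    (g := fun AB : Finset (Fin n) × Finset (Fin n) => AB.2.card)
    (s := pf n fun AB : Finset (Fin n) × Finset (Fin n) => AB.1.card = AB.2.card + r)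
    (t := Finset.range (n + 1)) ?mt w
  case mt =>
    intro AB _
    have := Finset.card_le_univ AB.2
    simp only [card_univ, Fintype.card_fin] at this
    simp only [Finset.mem_range]
    omega
  rw [← hfib, EZ]
  apply Finset.sum_congr rfl
  intro i hi
  have hset2 : (pf n fun AB : Finset (Fin n) × Finset (Fin n) =>
        AB.1.card = AB.2.card + r).filter (fun AB => AB.2.card = i)
      = (Finset.powersetCard (r + i) Finset.univ) ×ˢ (Finset.powersetCard i Finset.univ) := by
    ext AB
    simp only [Finset.mem_filter, mem_pf, Finset.mem_product, Finset.mem_powersetCard_univ]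
    omega
  rw [hset2, Finset.sum_product]
  have hcast : (r : ℤ) + (i : ℤ) = ((r + i : ℕ) : ℤ) := by push_cast; ring
  rw [hcast, eZ_natCast, eZ_natCast]
  rw [esymm, esymm, Finset.sum_mul_sum, Finset.sum_comm]
  apply Finset.sum_congr rfl
  intro B _
  apply Finset.sum_congr rfl
  intro A _
  simp only [w]
  ring

end ChBAux

/-- For every `a ≥ 0`,
`Σ_{b,c≥0} ch { T ∈ SST_n(λ(a,b,c)) : 𝔯_T = 0 } = E_a + E_{a+1}` in `ℤ[x_1,…,x_n]`.
(All but finitely many summands vanish.) -/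
theorem ch_b_infinity (n : ℕ) (hn : 1 ≤ n) (a : ℕ) :
    (∑ᶠ (b : ℕ) (c : ℕ),
        tabCh n a b c {T | IsTab n a b c T ∧ tabResidue n a b c T = 0}) =
      EZ n (a : ℤ) + EZ n ((a : ℤ) + 1) := by
  classical
  rw [ChBAux.lhs_eq a, ChBAux.sum_condA (a : ℤ),
    ChBAux.sum_hit (a : ℤ) (Int.natCast_nonneg a),
    ChBAux.sum_hit ((a : ℤ) + 1) (by positivity),
    ChBAux.sum_ge_split (a : ℤ), ChBAux.sum_ge_split ((a : ℤ) + 1)]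
  have eE1 := ChBAux.sum_eq_EZ (n := n) a
  have eE2 := ChBAux.sum_eq_EZ (n := n) (a + 1)
  push_cast at eE2
  rw [eE1, eE2]
  ring
end
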